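/- arXiv:2307.01732 — 5 statements merged into one kernel-verified Lean document; each statement's English description precedes it below -/
import Mathlib

section
/- Let t be a positive integer, let G be a finite simple graph not containing K_{t,t} as a subgraph, and let (G, 𝒫ⁱ) for i = 1, …, |V(G)| be an uncontraction sequence of G. Suppose that, for some m ∈ {1, …, |V(G)|}, there are parts X₁, X₂, X₃, X₄ ∈ 𝒫ᵐ which induce a red path in this order in the partitioned trigraph of (G, 𝒫ᵐ) (i.e., the edges X₁X₂, X₂X₃, X₃X₄ are present and red, and there are no other edges among these four parts), there is no edge of G between X₁ and X₄, and the induced subgraph G[X₁ ∪ X₂ ∪ X₃ ∪ X₄] contains at least 4t pairwise vertex-disjoint paths from X₁ to X₄. Then the width of this uncontraction sequence is greater than 2. -/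
/-- `P` is a partition of the vertex set into nonempty parts. -/
def IsPartition {V : Type} (P : Finset (Finset V)) : Prop :=
  (∀ X ∈ P, X.Nonempty) ∧ ∀ v : V, ∃! X, X ∈ P ∧ v ∈ X

/-- Adjacency of two parts in the partitioned trigraph: the parts are distinct and
`G` has an edge between them. -/
def TriAdj {V : Type} (G : SimpleGraph V) (X Y : Finset V) : Prop :=
  X ≠ Y ∧ ∃ x ∈ X, ∃ y ∈ Y, G.Adj x y

/-- A red edge of the partitioned trigraph: the parts are adjacent but not completely joined. -/
def RedAdj {V : Type} (G : SimpleGraph V) (X Y : Finset V) : Prop :=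
  TriAdj G X Y ∧ ¬ ∀ x ∈ X, ∀ y ∈ Y, G.Adj x y

/-- A black edge of the partitioned trigraph: the parts are adjacent and completely joined. -/
def BlackAdj {V : Type} (G : SimpleGraph V) (X Y : Finset V) : Prop :=
  TriAdj G X Y ∧ ∀ x ∈ X, ∀ y ∈ Y, G.Adj x y

/-- No edge of `G` between the two sets. -/
def NoEdgeBetween {V : Type} (G : SimpleGraph V) (X Y : Finset V) : Prop :=
  ∀ x ∈ X, ∀ y ∈ Y, ¬ G.Adj x y

/-- The red degree of the part `X` in the partitioned trigraph of `(G, P)`. -/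
noncomputable def redDegree {V : Type} (G : SimpleGraph V) (P : Finset (Finset V))
    (X : Finset V) : ℕ :=
  {Y : Finset V | Y ∈ P ∧ RedAdj G X Y}.ncard

/-- `Q` is obtained from the partition `P` by splitting one part into two nonempty parts. -/
def SplitsFrom {V : Type} (Q P : Finset (Finset V)) : Prop :=
  ∃ X Y Z : Finset V, X ∈ P ∧ Y.Nonempty ∧ Z.Nonempty ∧ (∀ v ∈ Y, v ∉ Z) ∧
    (∀ v : V, v ∈ X ↔ v ∈ Y ∨ v ∈ Z) ∧
    ∀ W : Finset V, W ∈ Q ↔ W = Y ∨ W = Z ∨ (W ∈ P ∧ W ≠ X)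

/-- `P 0, P 1, …, P (|V| - 1)` is an uncontraction sequence: it starts with the trivial
partition `{V}`, ends with the partition into singletons, and each partition is obtained
from the previous one by splitting one part into two. -/
def IsUncontractionSeq {V : Type} [Fintype V] (P : ℕ → Finset (Finset V)) : Prop :=
  (∀ i < Fintype.card V, IsPartition (P i)) ∧
  P 0 = {Finset.univ} ∧
  (∀ X ∈ P (Fintype.card V - 1), ∃ v : V, X = {v}) ∧
  ∀ i : ℕ, i + 1 < Fintype.card V → SplitsFrom (P (i + 1)) (P i)

/-- The uncontraction sequence `P` has width at most `d`: in each of its partitioned trigraphs,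
every part has red degree at most `d`. -/
def UncontractionWidthLE {V : Type} [Fintype V] (G : SimpleGraph V)
    (P : ℕ → Finset (Finset V)) (d : ℕ) : Prop :=
  ∀ i < Fintype.card V, ∀ X ∈ P i, redDegree G (P i) X ≤ d

/-- The twin-width of `G` is at most `d`: there is an uncontraction sequence of width at
most `d`. -/
def TwinWidthLE {V : Type} [Fintype V] (G : SimpleGraph V) (d : ℕ) : Prop :=
  ∃ P : ℕ → Finset (Finset V), IsUncontractionSeq P ∧ UncontractionWidthLE G P d

/-- `G` contains no `K_{t,t}` subgraph. -/
def KttFree {V : Type} (G : SimpleGraph V) (t : ℕ) : Prop :=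
  ¬ ∃ A B : Finset V, A.card = t ∧ B.card = t ∧ (∀ a ∈ A, a ∉ B) ∧
      ∀ a ∈ A, ∀ b ∈ B, G.Adj a b

/-- The four parts induce a red path `X₁ X₂ X₃ X₄` in the partitioned trigraph:
the consecutive pairs are joined by red edges and there are no other edges among the parts. -/
def RedPath4 {V : Type} (G : SimpleGraph V) (X₁ X₂ X₃ X₄ : Finset V) : Prop :=
  X₁ ≠ X₂ ∧ X₁ ≠ X₃ ∧ X₁ ≠ X₄ ∧ X₂ ≠ X₃ ∧ X₂ ≠ X₄ ∧ X₃ ≠ X₄ ∧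
  RedAdj G X₁ X₂ ∧ RedAdj G X₂ X₃ ∧ RedAdj G X₃ X₄ ∧
  NoEdgeBetween G X₁ X₃ ∧ NoEdgeBetween G X₁ X₄ ∧ NoEdgeBetween G X₂ X₄

/-- The induced subgraph `G[X₁ ∪ X₂ ∪ X₃ ∪ X₄]` contains `s` pairwise vertex-disjoint
paths starting in `X₁` and ending in `X₄`. -/
def DisjointPathsX1X4 {V : Type} (G : SimpleGraph V) (X₁ X₂ X₃ X₄ : Finset V) (s : ℕ) : Prop :=
  ∃ (a b : Fin s → V) (p : ∀ k : Fin s, G.Walk (a k) (b k)),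
    (∀ k, (p k).IsPath) ∧ (∀ k, a k ∈ X₁) ∧ (∀ k, b k ∈ X₄) ∧
    (∀ k, ∀ v ∈ (p k).support, v ∈ X₁ ∨ v ∈ X₂ ∨ v ∈ X₃ ∨ v ∈ X₄) ∧
    ∀ k k' : Fin s, k ≠ k' → ∀ v, v ∈ (p k).support → v ∉ (p k').support


/-
Each of the disjoint paths leaves `X₁ ∪ X₂` through a first edge `a b` from `X₂` to `X₃`, and
enters `X₃ ∪ X₄` for the last time through an edge from `X₂` to `X₃`, written `d c`. Follow the
parts `B ⊆ X₂` and `C ⊆ X₃` containing these endpoints along the uncontraction sequence. When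
`B` splits into `B₁` and `B₂`, some path runs from `C` into a part outside `X₂` that is not
completely joined to `C`; this red neighbour of `C` and red degree at most `2` leave at most one
of `B₁`, `B₂` red to `C`. The other one is completely joined to `C`, so every path with an
endpoint in it meets the common neighbourhood of `C`, and we continue with the remaining part;
splits of `C` are symmetric. By `K_{t,t}`-freeness, common neighbourhoods of parts with at least
`t` vertices have fewer than `t` vertices, so fewer than `2t` of the `4t` paths are ever lost and
more than `2t` keep their endpoints in `B`: impossible once `B` is a singleton.
-/

open Finset Function

theorem IsPartition.disjoint {V : Type} {P : Finset (Finset V)} (hP : IsPartition P)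
    {X Y : Finset V} (hX : X ∈ P) (hY : Y ∈ P) (hXY : X ≠ Y) : Disjoint X Y := by
  refine disjoint_left.2 fun v hvX hvY => hXY ?_
  obtain ⟨_, -, huniq⟩ := hP.2 v
  exact (huniq X ⟨hX, hvX⟩).trans (huniq Y ⟨hY, hvY⟩).symm

theorem NoEdgeBetween.symm {V : Type} {G : SimpleGraph V} {X Y : Finset V}
    (h : NoEdgeBetween G X Y) : NoEdgeBetween G Y X :=
  fun y hy x hx hyx => h x hx y hy hyx.symm

theorem card_le_redDegree {V : Type} {G : SimpleGraph V} {Q s : Finset (Finset V)}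
    {C : Finset V} (hs : ∀ E ∈ s, E ∈ Q ∧ RedAdj G C E) : s.card ≤ redDegree G Q C := by
  rw [redDegree, ← Set.ncard_coe_finset]
  exact Set.ncard_le_ncard (fun E hE => hs E hE) (Q.finite_toSet.subset fun E hE => hE.1)

theorem card_le_card_of_pairwise_disjoint {V ι : Type*} {S : ι → Set V}
    (hS : Pairwise (Disjoint on S)) {s : Finset ι} {T : Finset V}
    (h : ∀ k ∈ s, ∃ x ∈ S k, x ∈ T) : s.card ≤ T.card :=
  card_le_card_of_forall_subsingleton (fun k x => x ∈ S k)
    (fun k hk => (h k hk).imp fun _ hx => ⟨hx.2, hx.1⟩)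
    fun x _ _ hk _ hk' => hS.eq (Set.not_disjoint_iff.2 ⟨x, hk.2, hk'.2⟩)

namespace SimpleGraph.Walk

variable {V : Type} {G : SimpleGraph V}

theorem exists_adj_exit {U : Set V} : ∀ {x y : V} (p : G.Walk x y), x ∈ U → y ∉ U →
    ∃ u v, G.Adj u v ∧ v ∉ U ∧ v ∈ p.support ∧
      ∃ q : G.Walk x u, ∀ z ∈ q.support, z ∈ U ∧ z ∈ p.support
  | _, _, nil, hx, hy => absurd hx hy
  | _, _, cons (v := w) h p, hx, hy => by
    by_cases hw : w ∈ U
    · obtain ⟨u, v, huv, hv, hvp, q, hq⟩ := exists_adj_exit p hw hy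
      refine ⟨u, v, huv, hv, by simp [hvp], q.cons h, fun z hz => ?_⟩
      rcases List.mem_cons.1 (support_cons _ _ ▸ hz) with rfl | hz
      · simp [hx]
      · exact (hq z hz).imp_right fun hzp => by simp [hzp]
    · exact ⟨_, w, h, hw, by simp, nil, by simp [hx]⟩

theorem exists_adj_notMem_of_mem {x u : V} (q : G.Walk x u) {B : Set V} (hx : x ∉ B)
    (hu : u ∈ B) : ∃ w ∈ q.support, w ∉ B ∧ ∃ c ∈ B, G.Adj c w := by
  obtain ⟨d, hd, hd₁, hd₂⟩ := q.reverse.exists_boundary_dart B hu hx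
  exact ⟨d.snd, by simpa using q.reverse.dart_snd_mem_support_of_mem_darts hd, hd₂,
    d.fst, hd₁, d.adj⟩

end SimpleGraph.Walk

section CommonNeighbors

variable {V : Type} [Fintype V] (G : SimpleGraph V) [DecidableRel G.Adj]

def commonNbrs (B : Finset V) : Finset V := {x | ∀ y ∈ B, G.Adj x y}

variable {G}

@[simp]
theorem mem_commonNbrs {B : Finset V} {x : V} :
    x ∈ commonNbrs G B ↔ ∀ y ∈ B, G.Adj x y := by
  simp [commonNbrs]

theorem commonNbrs_anti {B B' : Finset V} (h : B' ⊆ B) : commonNbrs G B ⊆ commonNbrs G B' :=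
  fun _ hx => mem_commonNbrs.2 fun y hy => mem_commonNbrs.1 hx y (h hy)

theorem card_commonNbrs_lt {t : ℕ} (hfree : KttFree G t) {B : Finset V} (hB : t ≤ B.card) :
    (commonNbrs G B).card < t := by
  by_contra! h
  obtain ⟨A, hA, hAt⟩ := exists_subset_card_eq h
  obtain ⟨B', hB', hB't⟩ := exists_subset_card_eq hB
  exact hfree ⟨A, B', hAt, hB't,
    fun x hx hxB => G.irrefl (mem_commonNbrs.1 (hA hx) x (hB' hxB)),
    fun x hx y hy => mem_commonNbrs.1 (hA hx) y (hB' hy)⟩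

theorem subset_commonNbrs_of_not_redAdj {C W : Finset V} (h : ¬ RedAdj G C W) (hWC : W ≠ C)
    {x y : V} (hx : x ∈ W) (hy : y ∈ C) (hxy : G.Adj x y) : W ⊆ commonNbrs G C := by
  refine fun w hw => mem_commonNbrs.2 fun c hc => ?_
  by_contra hwc
  exact h ⟨⟨hWC.symm, y, hy, x, hx, hxy.symm⟩, fun hall => hwc (hall c hc w hw).symm⟩

end CommonNeighbors

/-- For the first edge `a b` from `X₂` to `X₃` on a path starting in `X₁`, with `S` its vertex
set, the neighbour required by `escape` lies on the part of the path before `a`. -/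
structure IsExitEdge {V : Type} (G : SimpleGraph V) (X Y : Finset V) (S : Set V) (a b : V) :
    Prop where
  adj : G.Adj a b
  left_mem : a ∈ X
  right_mem : b ∈ Y
  left_mem_set : a ∈ S
  right_mem_set : b ∈ S
  escape : ∀ B ⊆ X, a ∈ B → ∃ w ∈ S, w ∉ B ∧ w ∉ Y ∧ ∃ c ∈ B, G.Adj c w

theorem exists_isExitEdge {V : Type} {G : SimpleGraph V} {X₁ X₂ X₃ X₄ : Finset V}
    {S : Set V} (h12 : Disjoint X₁ X₂) (h13 : Disjoint X₁ X₃) (h23 : Disjoint X₂ X₃)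
    (e13 : NoEdgeBetween G X₁ X₃) (e14 : NoEdgeBetween G X₁ X₄)
    (e24 : NoEdgeBetween G X₂ X₄) {x y : V} (p : G.Walk x y) (hx : x ∈ X₁)
    (hy₁ : y ∉ X₁) (hy₂ : y ∉ X₂)
    (hpS : ∀ z ∈ p.support, z ∈ S)
    (hp : ∀ z ∈ p.support, z ∈ X₁ ∨ z ∈ X₂ ∨ z ∈ X₃ ∨ z ∈ X₄) :
    ∃ a b, IsExitEdge G X₂ X₃ S a b := by
  obtain ⟨a, b, hab, hb, hbp, q, hq⟩ :=
    p.exists_adj_exit (U := ↑X₁ ∪ ↑X₂) (Or.inl hx) fun hy => hy.elim hy₁ hy₂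
  have ha := hq a q.end_mem_support
  simp only [Set.mem_union, mem_coe, not_or] at ha hb
  have ha₂ : a ∈ X₂ := ha.1.resolve_left fun ha₁ => by
    rcases hp b hbp with h | h | h | h
    exacts [hb.1 h, hb.2 h, e13 a ha₁ b h hab, e14 a ha₁ b h hab]
  have hb₃ : b ∈ X₃ := by
    rcases hp b hbp with h | h | h | h
    exacts [absurd h hb.1, absurd h hb.2, h, absurd hab (e24 a ha₂ b h)]
  refine ⟨a, b, hab, ha₂, hb₃, hpS a ha.2, hpS b hbp, fun B hB haB => ?_⟩
  obtain ⟨w, hwq, hwB, c, hc, hcw⟩ :=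
    q.exists_adj_notMem_of_mem (B := ↑B) (fun hxB => disjoint_left.1 h12 hx (hB hxB)) haB
  have hw := hq w hwq
  simp only [Set.mem_union, mem_coe] at hw
  refine ⟨w, hpS w hw.2, hwB, fun hw₃ => ?_, c, hc, hcw⟩
  rcases hw.1 with h | h
  exacts [disjoint_left.1 h13 h hw₃, disjoint_left.1 h23 h hw₃]

/-- In the application `S k` is the vertex set of the `k`-th path, `a k b k` its first edge from
`X₂` to `X₃`, and `c k d k` its last one, read backwards. -/
structure Linkage {V : Type} (G : SimpleGraph V) (X Y : Finset V) (ι : Type*) where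
  S : ι → Set V
  a : ι → V
  b : ι → V
  c : ι → V
  d : ι → V
  pairwise_disjoint : Pairwise (Disjoint on S)
  disjoint : Disjoint X Y
  exit_left : ∀ k, IsExitEdge G X Y (S k) (a k) (b k)
  exit_right : ∀ k, IsExitEdge G Y X (S k) (c k) (d k)

namespace Linkage

variable {V : Type} {G : SimpleGraph V} {X Y : Finset V} {ι : Type*} (L : Linkage G X Y ι)

def symm : Linkage G Y X ι :=
  ⟨L.S, L.c, L.d, L.a, L.b, L.pairwise_disjoint, L.disjoint.symm, L.exit_right, L.exit_left⟩

def Crosses (B C : Finset V) (k : ι) : Prop :=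
  L.a k ∈ B ∧ L.d k ∈ B ∧ L.b k ∈ C ∧ L.c k ∈ C

def Tracks (B C F : Finset V) : Prop :=
  ∀ k, L.Crosses B C k ∨ ∃ x ∈ L.S k, x ∈ F

variable {L}

theorem crosses_self (k : ι) : L.Crosses X Y k :=
  ⟨(L.exit_left k).left_mem, (L.exit_right k).right_mem, (L.exit_left k).right_mem,
    (L.exit_right k).left_mem⟩

theorem Tracks.symm {B C F : Finset V} (h : L.Tracks B C F) : L.symm.Tracks C B F := by
  intro k
  rcases h k with ⟨ha, hd, hb, hc⟩ | hk
  exacts [Or.inl ⟨hc, hb, hd, ha⟩, Or.inr hk]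

theorem Tracks.mono {B C F F' : Finset V} (h : L.Tracks B C F) (hF : F ⊆ F') :
    L.Tracks B C F' :=
  fun k => (h k).imp_right fun ⟨x, hx, hxF⟩ => ⟨x, hx, hF hxF⟩

theorem card_crosses_le [Fintype ι] {B C : Finset V} [DecidablePred (L.Crosses B C)] :
    #{k | L.Crosses B C k} ≤ B.card :=
  card_le_card_of_pairwise_disjoint L.pairwise_disjoint fun k hk =>
    ⟨L.a k, (L.exit_left k).left_mem_set, (mem_filter.1 hk).2.1⟩

theorem Tracks.card_le_card_crosses_add [Fintype ι] {B C F : Finset V}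
    [DecidablePred (L.Crosses B C)] (h : L.Tracks B C F) :
    Fintype.card ι ≤ #{k | L.Crosses B C k} + F.card := by
  rw [← card_univ, ← card_filter_add_card_filter_not (L.Crosses B C)]
  gcongr
  exact card_le_card_of_pairwise_disjoint L.pairwise_disjoint fun k hk =>
    (h k).resolve_left (mem_filter.1 hk).2

theorem Tracks.card_le_card_add [Fintype ι] {B C F : Finset V} (h : L.Tracks B C F) :
    Fintype.card ι ≤ B.card + F.card := by
  classical
  exact h.card_le_card_crosses_add.trans (Nat.add_le_add_right L.card_crosses_le _)

variable [Fintype V] [DecidableRel G.Adj]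

theorem Tracks.exists_redAdj [Fintype ι] {B C F : Finset V} (h : L.Tracks B C F) (hCY : C ⊆ Y)
    {Q : Finset (Finset V)} (hQ : ∀ v, ∃ E ∈ Q, v ∈ E)
    (hcard : F.card + (commonNbrs G C).card < Fintype.card ι) :
    ∃ E ∈ Q, RedAdj G C E ∧ ¬ E ⊆ X := by
  classical
  by_contra! hnone
  have hcross : #{k | L.Crosses B C k} ≤ (commonNbrs G C).card := by
    refine card_le_card_of_pairwise_disjoint L.pairwise_disjoint fun k hk => ?_
    obtain ⟨w, hwS, hwC, hwX, c, hc, hcw⟩ :=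
      (L.exit_right k).escape C hCY (mem_filter.1 hk).2.2.2.2
    obtain ⟨E, hE, hwE⟩ := hQ w
    refine ⟨w, hwS, mem_commonNbrs.2 fun y hy => ?_⟩
    by_contra hwy
    have hCE : C ≠ E := by rintro rfl; exact hwC hwE
    refine hwX (hnone E hE ⟨⟨hCE, c, hc, w, hwE, hcw⟩, fun hall => ?_⟩ hwE)
    exact hwy (hall y hy w hwE).symm
  have := h.card_le_card_crosses_add
  omega

variable [DecidableEq V]

theorem Tracks.of_not_redAdj {B B₁ B₂ C F : Finset V} (h : L.Tracks B C F) (hCY : C ⊆ Y)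
    (hB : B ⊆ B₁ ∪ B₂) (h₂ : ¬ RedAdj G C B₂) (hF : commonNbrs G C ⊆ F) :
    L.Tracks B₁ C F := by
  have hjoined : ∀ {x y}, x ∈ X → x ∈ B₂ → y ∈ C → G.Adj x y → x ∈ F := by
    intro x y hxX hx hy hxy
    refine hF (subset_commonNbrs_of_not_redAdj h₂ ?_ hx hy hxy hx)
    rintro rfl
    exact disjoint_left.1 L.disjoint hxX (hCY hx)
  intro k
  obtain ⟨ha, hd, hb, hc⟩ | hk := h k
  · have hab := L.exit_left k
    have hcd := L.exit_right k
    by_cases ha₂ : L.a k ∈ B₂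
    · exact Or.inr ⟨_, hab.left_mem_set, hjoined hab.left_mem ha₂ hb hab.adj⟩
    by_cases hd₂ : L.d k ∈ B₂
    · exact Or.inr ⟨_, hcd.right_mem_set, hjoined hcd.right_mem hd₂ hc hcd.adj.symm⟩
    have hB₁ : ∀ {x}, x ∈ B → x ∉ B₂ → x ∈ B₁ := fun hx hx₂ =>
      (mem_union.1 (hB hx)).resolve_right hx₂
    exact Or.inl ⟨hB₁ ha ha₂, hB₁ hd hd₂, hb, hc⟩
  · exact Or.inr hk

variable (L) in
def IsLinkedPair (t : ℕ) (B C : Finset V) : Prop :=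
  (commonNbrs G B).card < t ∧ (commonNbrs G C).card < t ∧
    L.Tracks B C (commonNbrs G B ∪ commonNbrs G C)

theorem IsLinkedPair.symm {t : ℕ} {B C : Finset V} (h : L.IsLinkedPair t B C) :
    L.symm.IsLinkedPair t C B :=
  ⟨h.2.1, h.1, union_comm (commonNbrs G B) _ ▸ h.2.2.symm⟩

variable [Fintype ι] {t : ℕ}

theorem IsLinkedPair.add_two_le_card {B C : Finset V} (h : L.IsLinkedPair t B C)
    (hι : 3 * t ≤ Fintype.card ι) : t + 2 ≤ B.card := by
  obtain ⟨hB, hC, htr⟩ := h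
  have := htr.card_le_card_add
  have := card_union_le (commonNbrs G B) (commonNbrs G C)
  omega

theorem isLinkedPair_self (hfree : KttFree G t) (hι : t ≤ Fintype.card ι) :
    L.IsLinkedPair t X Y := by
  have hX := Tracks.card_le_card_add (L := L) (F := ∅) fun k => Or.inl (crosses_self k)
  have hY := Tracks.card_le_card_add (L := L.symm) (F := ∅) fun k => Or.inl (crosses_self k)
  rw [card_empty, add_zero] at hX hY
  exact ⟨card_commonNbrs_lt hfree (hι.trans hX), card_commonNbrs_lt hfree (hι.trans hY),
    fun k => Or.inl (L.crosses_self k)⟩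

theorem Tracks.isLinkedPair (hfree : KttFree G t) (hι : 3 * t ≤ Fintype.card ι)
    {B B' C : Finset V} (h : L.Tracks B' C (commonNbrs G B ∪ commonNbrs G C)) (hB' : B' ⊆ B)
    (hB : (commonNbrs G B).card < t) (hC : (commonNbrs G C).card < t) :
    L.IsLinkedPair t B' C := by
  have := h.card_le_card_add
  have := card_union_le (commonNbrs G B) (commonNbrs G C)
  exact ⟨card_commonNbrs_lt hfree (by omega), hC,
    h.mono (union_subset_union_left (commonNbrs_anti hB'))⟩

theorem IsLinkedPair.exists_of_split_left (hfree : KttFree G t) (hι : 3 * t ≤ Fintype.card ι)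
    {B C : Finset V} (h : L.IsLinkedPair t B C) (hBX : B ⊆ X) (hCY : C ⊆ Y)
    {Q : Finset (Finset V)} (hQ : ∀ v, ∃ E ∈ Q, v ∈ E)
    (hdeg : redDegree G Q C ≤ 2) {B₁ B₂ : Finset V} (hB₁ : B₁ ∈ Q) (hB₂ : B₂ ∈ Q)
    (h12 : B₁ ≠ B₂) (hB : ∀ v, v ∈ B ↔ v ∈ B₁ ∨ v ∈ B₂) :
    ∃ B' ∈ Q, B' ⊆ B ∧ L.IsLinkedPair t B' C := by
  obtain ⟨hJB, hJC, htr⟩ := h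
  have hB₁B : B₁ ⊆ B := fun v hv => (hB v).2 (Or.inl hv)
  have hB₂B : B₂ ⊆ B := fun v hv => (hB v).2 (Or.inr hv)
  have hJ := card_union_le (commonNbrs G B) (commonNbrs G C)
  obtain ⟨E, hE, hCE, hEX⟩ := htr.exists_redAdj hCY hQ (by omega)
  have hnot : ¬ (RedAdj G C B₁ ∧ RedAdj G C B₂) := by
    rintro ⟨h₁, h₂⟩
    have hEB : ∀ {B'}, B' ⊆ B → E ≠ B' := fun hB' hEB' => hEX (hEB' ▸ hB'.trans hBX)
    have := card_le_redDegree (s := {E, B₁, B₂}) (Q := Q) (C := C) (by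
      simp only [mem_insert, mem_singleton, forall_eq_or_imp, forall_eq]
      exact ⟨⟨hE, hCE⟩, ⟨hB₁, h₁⟩, hB₂, h₂⟩)
    rw [card_eq_three.2 ⟨E, B₁, B₂, hEB hB₁B, hEB hB₂B, h12, rfl⟩] at this
    omega
  have hsplit : B ⊆ B₁ ∪ B₂ := fun v hv => mem_union.2 ((hB v).1 hv)
  by_cases h₂ : RedAdj G C B₂
  · have h₁ : ¬ RedAdj G C B₁ := fun h₁ => hnot ⟨h₁, h₂⟩
    refine ⟨B₂, hB₂, hB₂B, Tracks.isLinkedPair hfree hι ?_ hB₂B hJB hJC⟩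
    exact htr.of_not_redAdj hCY (union_comm B₁ B₂ ▸ hsplit) h₁ subset_union_right
  · refine ⟨B₁, hB₁, hB₁B, Tracks.isLinkedPair hfree hι ?_ hB₁B hJB hJC⟩
    exact htr.of_not_redAdj hCY hsplit h₂ subset_union_right

theorem IsLinkedPair.exists_of_splitsFrom (hfree : KttFree G t) (hι : 3 * t ≤ Fintype.card ι)
    {B C : Finset V} (h : L.IsLinkedPair t B C) (hBX : B ⊆ X) (hCY : C ⊆ Y)
    {P Q : Finset (Finset V)} (hQP : SplitsFrom Q P) (hQ : IsPartition Q)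
    (hdeg : ∀ E ∈ Q, redDegree G Q E ≤ 2) (hB : B ∈ P) (hC : C ∈ P) :
    ∃ B' ∈ Q, ∃ C' ∈ Q, B' ⊆ X ∧ C' ⊆ Y ∧ L.IsLinkedPair t B' C' := by
  obtain ⟨D, D₁, D₂, -, ⟨v, hv⟩, -, hD12, hD, hQmem⟩ := hQP
  have hD₁ : D₁ ∈ Q := (hQmem D₁).2 (Or.inl rfl)
  have hD₂ : D₂ ∈ Q := (hQmem D₂).2 (Or.inr (Or.inl rfl))
  have hne : D₁ ≠ D₂ := by rintro rfl; exact hD12 v hv hv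
  have hcover : ∀ v, ∃ E ∈ Q, v ∈ E := fun v => (hQ.2 v).exists.imp fun _ hE => hE
  have hkeep : ∀ {E}, E ∈ P → E ≠ D → E ∈ Q := fun hE hED =>
    (hQmem _).2 (Or.inr (Or.inr ⟨hE, hED⟩))
  by_cases hBD : B = D
  · subst hBD
    have hCB : C ≠ B := by
      obtain ⟨x, hx⟩ := card_pos.1 (by have := h.add_two_le_card hι; omega : 0 < B.card)
      rintro rfl
      exact disjoint_left.1 L.disjoint (hBX hx) (hCY hx)
    obtain ⟨B', hB', hB'B, h'⟩ :=
      h.exists_of_split_left hfree hι hBX hCY hcover (hdeg C (hkeep hC hCB)) hD₁ hD₂ hne hD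
    exact ⟨B', hB', C, hkeep hC hCB, hB'B.trans hBX, hCY, h'⟩
  by_cases hCD : C = D
  · subst hCD
    obtain ⟨C', hC', hC'C, h'⟩ := h.symm.exists_of_split_left hfree hι hCY hBX hcover
      (hdeg B (hkeep hB hBD)) hD₁ hD₂ hne hD
    exact ⟨B, hkeep hB hBD, C', hC', hBX, hC'C.trans hCY, h'.symm⟩
  exact ⟨B, hkeep hB hBD, C, hkeep hC hCD, hBX, hCY, h⟩

theorem exists_isLinkedPair (hfree : KttFree G t) (hι : 3 * t ≤ Fintype.card ι)
    {P : ℕ → Finset (Finset V)} (hseq : IsUncontractionSeq P) (hW : UncontractionWidthLE G P 2)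
    {m : ℕ} (hX : X ∈ P m) (hY : Y ∈ P m) {j : ℕ} (hmj : m ≤ j)
    (hj : j < Fintype.card V) :
    ∃ B ∈ P j, ∃ C ∈ P j, B ⊆ X ∧ C ⊆ Y ∧ L.IsLinkedPair t B C := by
  induction j, hmj using Nat.le_induction with
  | base => exact ⟨X, hX, Y, hY, subset_rfl, subset_rfl, L.isLinkedPair_self hfree (by omega)⟩
  | succ j _ ih =>
    obtain ⟨B, hB, C, hC, hBX, hCY, h⟩ := ih (by omega)
    exact h.exists_of_splitsFrom hfree hι hBX hCY (hseq.2.2.2 j hj) (hseq.1 _ hj) (hW _ hj) hB hC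

end Linkage

theorem Linkage.not_uncontractionWidthLE {V : Type} [Fintype V] {G : SimpleGraph V}
    {X Y : Finset V} {ι : Type*} [Fintype ι] (L : Linkage G X Y ι) {t : ℕ}
    (hfree : KttFree G t) (hι : 3 * t ≤ Fintype.card ι) {P : ℕ → Finset (Finset V)}
    (hseq : IsUncontractionSeq P) {m : ℕ} (hm : m < Fintype.card V) (hX : X ∈ P m)
    (hY : Y ∈ P m) :
    ¬ UncontractionWidthLE G P 2 := by
  classical
  intro hW
  obtain ⟨B, hB, _, -, -, -, h⟩ :=
    L.exists_isLinkedPair hfree hι hseq hW hX hY (j := Fintype.card V - 1) (by omega) (by omega)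
  obtain ⟨v, rfl⟩ := hseq.2.2.1 B hB
  have := h.add_two_le_card hι
  rw [card_singleton] at this
  omega

theorem step_two_general (t : ℕ) {V : Type} [Fintype V] (G : SimpleGraph V)
    (hfree : KttFree G t)
    (P : ℕ → Finset (Finset V)) (hseq : IsUncontractionSeq P)
    (m : ℕ) (hm : m < Fintype.card V) (X₁ X₂ X₃ X₄ : Finset V)
    (h1 : X₁ ∈ P m) (h2 : X₂ ∈ P m) (h3 : X₃ ∈ P m) (h4 : X₄ ∈ P m)
    (hred : RedPath4 G X₁ X₂ X₃ X₄)
    (hpaths : DisjointPathsX1X4 G X₁ X₂ X₃ X₄ (4 * t)) :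
    ¬ UncontractionWidthLE G P 2 := by
  have hdisj := fun {A B : Finset V} => (hseq.1 m hm).disjoint (X := A) (Y := B)
  obtain ⟨h12, h13, h14, h23, h24, h34, -, -, -, e13, e14, e24⟩ := hred
  obtain ⟨x, y, p, -, hx, hy, hp, hpd⟩ := hpaths
  choose a b hab using fun k => exists_isExitEdge (hdisj h1 h2 h12) (hdisj h1 h3 h13)
    (hdisj h2 h3 h23) e13 e14 e24 (p k) (hx k) (disjoint_right.1 (hdisj h1 h4 h14) (hy k))
    (disjoint_right.1 (hdisj h2 h4 h24) (hy k)) (S := {z | z ∈ (p k).support})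
    (fun _ hz => hz) (hp k)
  choose c d hcd using fun k => exists_isExitEdge (hdisj h4 h3 h34.symm) (hdisj h4 h2 h24.symm)
    (hdisj h3 h2 h23.symm) e24.symm e14.symm e13.symm (p k).reverse (hy k)
    (disjoint_left.1 (hdisj h1 h4 h14) (hx k)) (disjoint_left.1 (hdisj h1 h3 h13) (hx k))
    (S := {z | z ∈ (p k).support}) (fun _ hz => by simpa using hz)
    (fun z hz => by have := hp k z (by simpa using hz); tauto)
  let L : Linkage G X₂ X₃ (Fin (4 * t)) :=
    ⟨_, a, b, c, d, fun k k' hkk' => Set.disjoint_left.2 (hpd k k' hkk'), hdisj h2 h3 h23,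
      hab, hcd⟩
  exact L.not_uncontractionWidthLE hfree (by rw [Fintype.card_fin]; omega) hseq hm h2 h3

/-- Step II. If `G` has no `K_{t,t}` subgraph and at some step `m` of an
uncontraction sequence there are parts `X₁, X₂, X₃, X₄` inducing a red path in this order,
with no edge between `X₁` and `X₄`, such that `G[X₁ ∪ X₂ ∪ X₃ ∪ X₄]` contains at least
`4 * t` pairwise vertex-disjoint paths from `X₁` to `X₄`, then the width of the
uncontraction sequence is greater than `2`. -/
theorem step_two (t : ℕ) (ht : 1 ≤ t) {V : Type} [Fintype V] (G : SimpleGraph V)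
    (hfree : KttFree G t)
    (P : ℕ → Finset (Finset V)) (hseq : IsUncontractionSeq P)
    (m : ℕ) (hm : m < Fintype.card V) (X₁ X₂ X₃ X₄ : Finset V)
    (h1 : X₁ ∈ P m) (h2 : X₂ ∈ P m) (h3 : X₃ ∈ P m) (h4 : X₄ ∈ P m)
    (hred : RedPath4 G X₁ X₂ X₃ X₄) (hno : NoEdgeBetween G X₁ X₄)
    (hpaths : DisjointPathsX1X4 G X₁ X₂ X₃ X₄ (4 * t)) :
    ¬ UncontractionWidthLE G P 2 :=
  step_two_general t G hfree P hseq m hm X₁ X₂ X₃ X₄ h1 h2 h3 h4 hred hpaths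
end

section
/- For every positive integer N, any subdivision of the (2N+2)×(2N+2) wall contains an N×N cubic mesh as a subgraph. -/
/-- `G` contains an `N × N` cubic mesh as a (not necessarily induced) subgraph:
there are `N` pairwise vertex-disjoint paths (rows) and `N` pairwise vertex-disjoint paths
(columns), the ends of rows avoid all columns and vice versa, the union of all these paths
has maximum degree at most `3`, and every row intersects every column in precisely one
common subpath of nonzero length. -/
def HasCubicMesh {V : Type} (G : SimpleGraph V) (N : ℕ) : Prop :=
  ∃ (ra rb ca cb : Fin N → V)
    (rows : ∀ i : Fin N, G.Walk (ra i) (rb i))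
    (cols : ∀ j : Fin N, G.Walk (ca j) (cb j)),
    (∀ i, (rows i).IsPath) ∧ (∀ j, (cols j).IsPath) ∧
    (∀ i i' : Fin N, i ≠ i' → ∀ v, v ∈ (rows i).support → v ∉ (rows i').support) ∧
    (∀ j j' : Fin N, j ≠ j' → ∀ v, v ∈ (cols j).support → v ∉ (cols j').support) ∧
    (∀ i j, ra i ∉ (cols j).support ∧ rb i ∉ (cols j).support) ∧
    (∀ i j, ca j ∉ (rows i).support ∧ cb j ∉ (rows i).support) ∧
    (∀ v : V,
      {u : V | (∃ i, s(v, u) ∈ (rows i).edges) ∨ ∃ j, s(v, u) ∈ (cols j).edges}.ncard ≤ 3) ∧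
    ∀ i j, ∃ (x y : V) (q : G.Walk x y), q.IsPath ∧ 0 < q.length ∧
      (∀ e ∈ q.edges, e ∈ (rows i).edges) ∧ (∀ e ∈ q.edges, e ∈ (cols j).edges) ∧
      ∀ v : V, (v ∈ (rows i).support ∧ v ∈ (cols j).support) ↔ v ∈ q.support

/-- The `N × N` wall: vertex `(i, j)` is the `j`-th vertex of the `i`-th horizontal path;
vertical edges `(i, j) - (i+1, j)` are present when `i` and `j` have the same parity. -/
def wallGraph (N : ℕ) : SimpleGraph (Fin N × Fin N) :=
  SimpleGraph.fromRel fun p q =>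
    (p.1 = q.1 ∧ (p.2 : ℕ) + 1 = (q.2 : ℕ)) ∨
    (p.2 = q.2 ∧ (p.1 : ℕ) + 1 = (q.1 : ℕ) ∧ (p.1 : ℕ) % 2 = (p.2 : ℕ) % 2)

/-- `S` is a subdivision of `H`: branch vertices are given by an injection `f`, every edge
of `H` is replaced by a path of length at least one between the corresponding branch
vertices, these paths are internally disjoint from each other and from the branch vertices,
and `S` has no other edges. -/
def IsSubdivision {U W : Type} (H : SimpleGraph U) (S : SimpleGraph W) : Prop :=
  ∃ f : U → W, Function.Injective f ∧
    ∃ P : ∀ ⦃u v : U⦄, H.Adj u v → S.Walk (f u) (f v),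
      (∀ (u v : U) (h : H.Adj u v), (P h).IsPath ∧ 0 < (P h).length) ∧
      (∀ (u v : U) (h : H.Adj u v), P h.symm = (P h).reverse) ∧
      (∀ (u v : U) (h : H.Adj u v), ∀ w ∈ (P h).support,
        w ≠ f u → w ≠ f v → ∀ x : U, w ≠ f x) ∧
      (∀ (u v : U) (h : H.Adj u v) (u' v' : U) (h' : H.Adj u' v'),
        s(u, v) ≠ s(u', v') → ∀ w : W, w ∈ (P h).support → w ∈ (P h').support →
          (w = f u ∨ w = f v) ∧ (w = f u' ∨ w = f v')) ∧
      ∀ a b : W, S.Adj a b ↔ ∃ (u v : U) (h : H.Adj u v), s(a, b) ∈ (P h).edges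

/-!
The wall itself contains an `N × N` cubic mesh: the rows are the wall rows `1, 3, …, 2N - 1`,
and the `j`-th column zigzags down through the wall columns `2j + 1` and `2j + 2`, so that it
meets row `2i + 1` in exactly the horizontal edge between these two columns. A cubic mesh in a
graph `H` lifts to every subdivision of `H` by replacing each edge with its subdividing path.
Since these paths are internally disjoint, paths stay paths and disjoint walks stay disjoint, a
branch vertex keeps its degree while a subdividing vertex has degree two, and the intersection of
a lifted row and a lifted column is the lift of their original intersection; for edges this uses
that a subwalk of a path contains every edge of the path between two of its vertices.
-/

open SimpleGraph

namespace SimpleGraph.Walk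

variable {V : Type*} {G : SimpleGraph V}

lemma IsPath.append {u v w : V} {p : G.Walk u v} {q : G.Walk v w} (hp : p.IsPath)
    (hq : q.IsPath) (hpq : ∀ x ∈ p.support, x ∈ q.support → x = v) : (p.append q).IsPath := by
  rw [isPath_def, support_append]
  refine (isPath_def _ |>.mp hp).append (isPath_def _ |>.mp hq).tail fun x hx hx' => ?_
  obtain rfl := hpq x hx (List.mem_of_mem_tail hx')
  have := (isPath_def _).mp hq
  rw [← q.cons_tail_support] at this
  exact (List.nodup_cons.mp this).1 hx'

lemma IsPath.ncard_setOf_mem_edges_le_two {u v : V} {p : G.Walk u v} (hp : p.IsPath) (x : V) :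
    {y | s(x, y) ∈ p.edges}.ncard ≤ 2 := by
  by_cases hx : x ∈ p.support
  · obtain ⟨i, rfl, hi⟩ := mem_support_iff_exists_getVert.mp hx
    have hsub : {y | s(p.getVert i, y) ∈ p.edges} ⊆ {p.getVert (i - 1), p.getVert (i + 1)} := by
      intro y hy
      obtain ⟨j, hj, hjy⟩ := p.mk_mem_edges_iff_exists.mp hy
      rcases Sym2.eq_iff.mp hjy with ⟨hji, rfl⟩ | ⟨hji, hjy⟩
      · obtain rfl := hp.getVert_injOn (by simp; omega) (by simp; omega) hji
        exact .inr rfl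
      · obtain rfl := hp.getVert_injOn (by simp; omega) (by simp; omega) hjy
        exact .inl (by simp [← hji])
    exact (Set.ncard_le_ncard hsub (Set.toFinite _)).trans
      ((Set.ncard_insert_le _ _).trans (by simp))
  · have hempty : {y | s(x, y) ∈ p.edges} = ∅ :=
      Set.eq_empty_of_forall_notMem fun y hy => hx (p.fst_mem_support_of_mem_edges hy)
    simp [hempty]

lemma IsPath.isAcyclic_fromEdgeSet {u v : V} {p : G.Walk u v} (hp : p.IsPath) :
    (fromEdgeSet {e | e ∈ p.edges}).IsAcyclic := by
  induction p with
  | nil => simp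
  | @cons a c b h q ih =>
    rw [cons_isPath_iff] at hp
    have hunreach : ¬ (fromEdgeSet {e | e ∈ q.edges}).Reachable a c := by
      rintro ⟨w⟩
      have hnil : ¬ w.Nil := w.not_nil_of_ne h.ne
      have hsnd := (fromEdgeSet_adj _).mp (w.adj_snd hnil)
      exact hp.2 (q.fst_mem_support_of_mem_edges hsnd.1)
    have hsup := (ih hp.1).sup_edge_of_not_reachable hunreach
    convert hsup using 1
    ext x y
    simp only [edge, sup_adj, fromEdgeSet_adj, Set.mem_ofPred_eq, edges_cons, List.mem_cons,
      Set.mem_singleton_iff]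
    tauto

/-- The edges of a path form a forest, in which every edge is a bridge. -/
lemma IsPath.mem_edges_of_edges_subset {a b x y u w : V} {p : G.Walk a b} (hp : p.IsPath)
    {q : G.Walk x y} (hq : q.edges ⊆ p.edges) (hu : u ∈ q.support) (hw : w ∈ q.support)
    (huw : s(u, w) ∈ p.edges) : s(u, w) ∈ q.edges := by
  classical
  have hadj : (fromEdgeSet {e | e ∈ p.edges}).Adj u w :=
    (fromEdgeSet_adj _).mpr ⟨huw, (p.adj_of_mem_edges huw).ne⟩
  let r := (q.takeUntil u hu).reverse.append (q.takeUntil w hw)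
  have hr : r.edges ⊆ q.edges := by
    intro e he
    simp only [r, edges_append, edges_reverse, List.mem_append, List.mem_reverse] at he
    exact he.elim (fun he => q.edges_takeUntil_subset_edges hu he)
      (fun he => q.edges_takeUntil_subset_edges hw he)
  have hbridge := isAcyclic_iff_forall_adj_isBridge.mp hp.isAcyclic_fromEdgeSet hadj
  have hr' := isBridge_iff_forall_walk_mem_edges.mp hbridge (r.transfer _ fun e he =>
    (edgeSet_fromEdgeSet _).symm ▸ ⟨hq (hr he), (G.not_isDiag_of_mem_edgeSet
      (r.edges_subset_edgeSet he))⟩)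
  rw [edges_transfer] at hr'
  exact hr hr'

lemma not_nil_of_edges_subset {a b x y : V} {p : G.Walk a b} {q : G.Walk x y} (hq : ¬ q.Nil)
    (hqp : q.edges ⊆ p.edges) : ¬ p.Nil := fun hp =>
  hq (edges_eq_nil.mp (List.eq_nil_of_subset_nil (edges_eq_nil.mpr hp ▸ hqp)))

def ofSeq (g : ℕ → V) : (n : ℕ) → (∀ k < n, G.Adj (g k) (g (k + 1))) → G.Walk (g 0) (g n)
  | 0, _ => nil
  | n + 1, h => (ofSeq g n fun k hk => h k (by omega)).concat (h n (by omega))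

variable (g : ℕ → V)

lemma mem_support_ofSeq {n : ℕ} (h : ∀ k < n, G.Adj (g k) (g (k + 1))) (v : V) :
    v ∈ (ofSeq g n h).support ↔ ∃ k ≤ n, g k = v := by
  induction n with
  | zero => simp [ofSeq, eq_comm]
  | succ n ih =>
    simp only [ofSeq, support_concat, List.mem_append, ih, List.mem_singleton]
    constructor
    · rintro (⟨k, hk, rfl⟩ | rfl)
      exacts [⟨k, by omega, rfl⟩, ⟨n + 1, le_rfl, rfl⟩]
    · rintro ⟨k, hk, rfl⟩
      rcases Nat.lt_or_ge k (n + 1) with hk' | hk'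
      exacts [.inl ⟨k, by omega, rfl⟩, .inr (by rw [show k = n + 1 by omega])]

lemma mem_edges_ofSeq {n : ℕ} (h : ∀ k < n, G.Adj (g k) (g (k + 1))) (e : Sym2 V) :
    e ∈ (ofSeq g n h).edges ↔ ∃ k < n, s(g k, g (k + 1)) = e := by
  induction n with
  | zero => simp [ofSeq]
  | succ n ih =>
    simp only [ofSeq, edges_concat, List.concat_eq_append, List.mem_append, ih,
      List.mem_singleton]
    constructor
    · rintro (⟨k, hk, rfl⟩ | rfl)
      exacts [⟨k, by omega, rfl⟩, ⟨n, by omega, rfl⟩]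
    · rintro ⟨k, hk, rfl⟩
      rcases Nat.lt_or_ge k n with hk' | hk'
      exacts [.inl ⟨k, hk', rfl⟩, .inr (by rw [show k = n by omega])]

lemma isPath_ofSeq {n : ℕ} (h : ∀ k < n, G.Adj (g k) (g (k + 1)))
    (hg : Set.InjOn g {k | k ≤ n}) : (ofSeq g n h).IsPath := by
  induction n with
  | zero => exact IsPath.nil
  | succ n ih =>
    refine (ih _ (hg.mono fun k hk => by simp at hk ⊢; omega)).concat ?_ _
    rw [mem_support_ofSeq]
    rintro ⟨k, hk, hgk⟩
    have := hg (by simp; omega) (by simp) hgk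
    omega

end SimpleGraph.Walk

open Walk

structure Subdivision {U W : Type*} (H : SimpleGraph U) (S : SimpleGraph W) where
  branch : U → W
  branch_injective : Function.Injective branch
  path : ∀ ⦃u v : U⦄, H.Adj u v → S.Walk (branch u) (branch v)
  isPath_path : ∀ ⦃u v : U⦄ (h : H.Adj u v), (path h).IsPath
  path_symm : ∀ ⦃u v : U⦄ (h : H.Adj u v), path h.symm = (path h).reverse
  eq_or_eq_of_branch_mem_path : ∀ ⦃u v : U⦄ (h : H.Adj u v) ⦃x : U⦄,
    branch x ∈ (path h).support → x = u ∨ x = v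
  exists_branch_of_mem_path : ∀ ⦃u v : U⦄ (h : H.Adj u v) ⦃u' v' : U⦄ (h' : H.Adj u' v'),
    s(u, v) ≠ s(u', v') → ∀ ⦃w : W⦄, w ∈ (path h).support → w ∈ (path h').support →
      ∃ z, w = branch z ∧ (z = u ∨ z = v) ∧ (z = u' ∨ z = v')

lemma IsSubdivision.nonempty_subdivision {U W : Type} {H : SimpleGraph U} {S : SimpleGraph W}
    (hS : IsSubdivision H S) : Nonempty (Subdivision H S) := by
  obtain ⟨f, hf, P, hP, hsymm, hbranch, hinter, -⟩ := hS
  refine ⟨⟨f, hf, P, fun u v h => (hP u v h).1, fun u v h => hsymm u v h, ?_, ?_⟩⟩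
  · intro u v h x hx
    by_contra! hne
    exact hbranch u v h _ hx (hf.ne hne.1) (hf.ne hne.2) x rfl
  · intro u v h u' v' h' hne w hw hw'
    obtain ⟨hz, hz'⟩ := hinter u v h u' v' h' hne w hw hw'
    rcases hz with rfl | rfl
    · exact ⟨u, rfl, .inl rfl, hz'.imp (fun h => hf h) (fun h => hf h)⟩
    · exact ⟨v, rfl, .inr rfl, hz'.imp (fun h => hf h) (fun h => hf h)⟩

namespace Subdivision

variable {U W : Type*} {H : SimpleGraph U} {S : SimpleGraph W}

def lift (D : Subdivision H S) : ∀ {u v : U}, H.Walk u v → S.Walk (D.branch u) (D.branch v)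
  | _, _, .nil => .nil
  | _, _, .cons h p => (D.path h).append (lift D p)

variable (D : Subdivision H S)

lemma not_nil_path {u v : U} (h : H.Adj u v) : ¬ (D.path h).Nil :=
  not_nil_of_ne (D.branch_injective.ne h.ne)

lemma length_le_length_lift {u v : U} (w : H.Walk u v) : w.length ≤ (D.lift w).length := by
  induction w with
  | nil => simp [lift]
  | cons h p ih =>
    have := not_nil_iff_lt_length.mp (D.not_nil_path h)
    simp only [lift, length_append, length_cons]
    omega

lemma not_nil_lift {u v : U} {w : H.Walk u v} (hw : ¬ w.Nil) : ¬ (D.lift w).Nil :=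
  not_nil_iff_lt_length.mpr
    ((not_nil_iff_lt_length.mp hw).trans_le (D.length_le_length_lift w))

lemma mem_edges_path_congr {a b x y : U} (h : H.Adj a b) (h' : H.Adj x y)
    (he : s(a, b) = s(x, y)) {e : Sym2 W} : e ∈ (D.path h).edges ↔ e ∈ (D.path h').edges := by
  rcases Sym2.eq_iff.mp he with ⟨rfl, rfl⟩ | ⟨rfl, rfl⟩
  · rfl
  · rw [D.path_symm h, edges_reverse, List.mem_reverse]

lemma mem_edges_lift {u v : U} (w : H.Walk u v) (e : Sym2 W) :
    e ∈ (D.lift w).edges ↔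
      ∃ (a b : U) (h : H.Adj a b), s(a, b) ∈ w.edges ∧ e ∈ (D.path h).edges := by
  induction w with
  | nil => simp [lift]
  | @cons u m v h p ih =>
    rw [lift, edges_append, List.mem_append, ih]
    constructor
    · rintro (he | ⟨a, b, h', hw, he⟩)
      · exact ⟨u, m, h, by simp, he⟩
      · exact ⟨a, b, h', by simp [hw], he⟩
    · rintro ⟨a, b, h', hw, he⟩
      rcases List.mem_cons.mp hw with heq | hw
      · exact .inl ((D.mem_edges_path_congr h' h heq).mp he)
      · exact .inr ⟨a, b, h', hw, he⟩

lemma edges_lift_subset {u v u' v' : U} {w : H.Walk u v} {w' : H.Walk u' v'}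
    (hw : w.edges ⊆ w'.edges) : (D.lift w).edges ⊆ (D.lift w').edges := by
  intro e he
  obtain ⟨a, b, h, hab, he⟩ := (D.mem_edges_lift w e).mp he
  exact (D.mem_edges_lift w' e).mpr ⟨a, b, h, hw hab, he⟩

lemma mem_support_lift {u v : U} {w : H.Walk u v} (hw : ¬ w.Nil) (z : W) :
    z ∈ (D.lift w).support ↔
      ∃ (a b : U) (h : H.Adj a b), s(a, b) ∈ w.edges ∧ z ∈ (D.path h).support := by
  rw [mem_support_iff_exists_mem_edges_of_not_nil (D.not_nil_lift hw)]
  constructor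
  · rintro ⟨e, he, hze⟩
    obtain ⟨a, b, h, hab, he⟩ := (D.mem_edges_lift w e).mp he
    refine ⟨a, b, h, hab, ?_⟩
    exact (mem_support_iff_exists_mem_edges_of_not_nil (D.not_nil_path h)).mpr ⟨e, he, hze⟩
  · rintro ⟨a, b, h, hab, hz⟩
    obtain ⟨e, he, hze⟩ :=
      (mem_support_iff_exists_mem_edges_of_not_nil (D.not_nil_path h)).mp hz
    exact ⟨e, (D.mem_edges_lift w e).mpr ⟨a, b, h, hab, he⟩, hze⟩

lemma branch_mem_support_lift {u v : U} (w : H.Walk u v) (x : U) :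
    D.branch x ∈ (D.lift w).support ↔ x ∈ w.support := by
  induction w with
  | nil => simp [lift, D.branch_injective.eq_iff]
  | @cons u m v h p ih =>
    have hpath : D.branch x ∈ (D.path h).support ↔ x = u ∨ x = m :=
      ⟨fun hx => D.eq_or_eq_of_branch_mem_path h hx,
        by rintro (rfl | rfl); exacts [start_mem_support _, end_mem_support _]⟩
    rw [lift, mem_support_append_iff, hpath, ih, support_cons, List.mem_cons]
    have := p.start_mem_support
    grind

lemma isPath_lift {u v : U} {w : H.Walk u v} (hw : w.IsPath) : (D.lift w).IsPath := by
  induction w with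
  | nil => exact IsPath.nil
  | @cons u m v h p ih =>
    rw [cons_isPath_iff] at hw
    refine (D.isPath_path h).append (ih hw.1) fun x hx hx' => ?_
    cases p with
    | nil => simpa [lift] using hx'
    | cons h₂ q =>
      obtain ⟨a, b, h', hab, hx'⟩ := (D.mem_support_lift not_nil_cons x).mp hx'
      have hne : s(u, m) ≠ s(a, b) := by
        rintro heq
        rcases Sym2.eq_iff.mp heq with ⟨rfl, -⟩ | ⟨rfl, -⟩
        exacts [hw.2 (fst_mem_support_of_mem_edges _ hab),
          hw.2 (snd_mem_support_of_mem_edges _ hab)]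
      obtain ⟨z, rfl, hz, hz'⟩ := D.exists_branch_of_mem_path h h' hne hx hx'
      rcases hz with rfl | rfl
      · exact hw.2 (hz'.elim (· ▸ fst_mem_support_of_mem_edges _ hab)
          (· ▸ snd_mem_support_of_mem_edges _ hab)) |>.elim
      · rfl

lemma common_edge_or_vertex_of_mem_support_lift {u v u' v' : U} {w : H.Walk u v}
    {w' : H.Walk u' v'} (hw : ¬ w.Nil) (hw' : ¬ w'.Nil) {z : W}
    (hz : z ∈ (D.lift w).support) (hz' : z ∈ (D.lift w').support) :
    (∃ (a b : U) (h : H.Adj a b), s(a, b) ∈ w.edges ∧ s(a, b) ∈ w'.edges ∧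
      z ∈ (D.path h).support) ∨ ∃ x ∈ w.support, x ∈ w'.support ∧ z = D.branch x := by
  obtain ⟨a, b, h, hab, hz⟩ := (D.mem_support_lift hw z).mp hz
  obtain ⟨a', b', h', hab', hz'⟩ := (D.mem_support_lift hw' z).mp hz'
  by_cases heq : s(a, b) = s(a', b')
  · exact .inl ⟨a, b, h, hab, heq ▸ hab', hz⟩
  · obtain ⟨x, rfl, hx, hx'⟩ := D.exists_branch_of_mem_path h h' heq hz hz'
    refine .inr ⟨x, ?_, ?_, rfl⟩
    · rcases hx with rfl | rfl
      exacts [fst_mem_support_of_mem_edges _ hab, snd_mem_support_of_mem_edges _ hab]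
    · rcases hx' with rfl | rfl
      exacts [fst_mem_support_of_mem_edges _ hab', snd_mem_support_of_mem_edges _ hab']

lemma support_lift_disjoint {u v u' v' : U} {w : H.Walk u v} {w' : H.Walk u' v'}
    (hw : ¬ w.Nil) (hw' : ¬ w'.Nil) (hdisj : ∀ x ∈ w.support, x ∉ w'.support) :
    ∀ z ∈ (D.lift w).support, z ∉ (D.lift w').support := by
  intro z hz hz'
  rcases D.common_edge_or_vertex_of_mem_support_lift hw hw' hz hz' with
    ⟨a, b, -, hab, hab', -⟩ | ⟨x, hx, hx', -⟩
  · exact hdisj a (fst_mem_support_of_mem_edges _ hab) (fst_mem_support_of_mem_edges _ hab')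
  · exact hdisj x hx hx'

lemma mem_support_lift_inter_iff {a b a' b' x y : U} {r : H.Walk a b} {c : H.Walk a' b'}
    {q : H.Walk x y} (hr : r.IsPath) (hq : ¬ q.Nil) (hqr : q.edges ⊆ r.edges)
    (hqc : q.edges ⊆ c.edges) (hinter : ∀ z, z ∈ r.support ∧ z ∈ c.support ↔ z ∈ q.support)
    (z : W) : z ∈ (D.lift r).support ∧ z ∈ (D.lift c).support ↔ z ∈ (D.lift q).support := by
  have hrnil := not_nil_of_edges_subset hq hqr
  have hcnil := not_nil_of_edges_subset hq hqc
  constructor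
  · rintro ⟨hzr, hzc⟩
    rcases D.common_edge_or_vertex_of_mem_support_lift hrnil hcnil hzr hzc with
      ⟨u, v, h, hr', hc', hz⟩ | ⟨x, hxr, hxc, rfl⟩
    · have hu := (hinter u).mp
        ⟨fst_mem_support_of_mem_edges _ hr', fst_mem_support_of_mem_edges _ hc'⟩
      have hv := (hinter v).mp
        ⟨snd_mem_support_of_mem_edges _ hr', snd_mem_support_of_mem_edges _ hc'⟩
      exact (D.mem_support_lift hq z).mpr
        ⟨u, v, h, hr.mem_edges_of_edges_subset hqr hu hv hr', hz⟩
    · exact (D.branch_mem_support_lift q x).mpr ((hinter x).mp ⟨hxr, hxc⟩)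
  · intro hz
    obtain ⟨u, v, h, huv, hz⟩ := (D.mem_support_lift hq z).mp hz
    exact ⟨(D.mem_support_lift hrnil z).mpr ⟨u, v, h, hqr huv, hz⟩,
      (D.mem_support_lift hcnil z).mpr ⟨u, v, h, hqc huv, hz⟩⟩

lemma ncard_setOf_mem_edges_path_branch_le {E : Set (Sym2 U)} {x : U}
    (hfin : {y | s(x, y) ∈ E}.Finite) :
    {u | ∃ (a b : U) (h : H.Adj a b), s(a, b) ∈ E ∧ s(D.branch x, u) ∈ (D.path h).edges}.ncard ≤
      {y | s(x, y) ∈ E}.ncard := by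
  classical
  let g : U → W := fun y => if h : H.Adj x y then (D.path h).snd else D.branch x
  have hsub : {u | ∃ (a b : U) (h : H.Adj a b), s(a, b) ∈ E ∧
      s(D.branch x, u) ∈ (D.path h).edges} ⊆ g '' {y | s(x, y) ∈ E} := by
    rintro u ⟨a, b, h, hab, hu⟩
    rcases D.eq_or_eq_of_branch_mem_path h (fst_mem_support_of_mem_edges _ hu) with rfl | rfl
    · exact ⟨b, hab, by simp [g, h, (D.isPath_path h).eq_snd_of_mem_edges hu]⟩
    · have hu' : s(D.branch x, u) ∈ (D.path h.symm).edges := by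
        rwa [D.path_symm, edges_reverse, List.mem_reverse]
      refine ⟨a, ?_, by simp [g, h.symm, (D.isPath_path h.symm).eq_snd_of_mem_edges hu']⟩
      rwa [Set.mem_ofPred_eq, Sym2.eq_swap]
  exact (Set.ncard_le_ncard hsub (hfin.image g)).trans (Set.ncard_image_le hfin)

lemma ncard_setOf_mem_edges_path_le_two {E : Set (Sym2 U)} {v : W}
    (hv : ∀ x, v ≠ D.branch x) :
    {u | ∃ (a b : U) (h : H.Adj a b), s(a, b) ∈ E ∧ s(v, u) ∈ (D.path h).edges}.ncard ≤ 2 := by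
  rcases Set.eq_empty_or_nonempty
      {u | ∃ (a b : U) (h : H.Adj a b), s(a, b) ∈ E ∧ s(v, u) ∈ (D.path h).edges} with
    hempty | ⟨u₀, a, b, h, -, hu₀⟩
  · rw [hempty, Set.ncard_empty]
    exact zero_le_two
  have hsub : {u | ∃ (a b : U) (h : H.Adj a b), s(a, b) ∈ E ∧
      s(v, u) ∈ (D.path h).edges} ⊆ {u | s(v, u) ∈ (D.path h).edges} := by
    rintro u ⟨a', b', h', -, hu⟩
    by_cases heq : s(a', b') = s(a, b)
    · exact (D.mem_edges_path_congr h' h heq).mp hu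
    · obtain ⟨z, rfl, -⟩ := D.exists_branch_of_mem_path h' h heq
        (fst_mem_support_of_mem_edges _ hu) (fst_mem_support_of_mem_edges _ hu₀)
      exact absurd rfl (hv z)
  have hfin : {u | s(v, u) ∈ (D.path h).edges}.Finite :=
    (D.path h).support.finite_toSet.subset fun u hu => snd_mem_support_of_mem_edges _ hu
  exact (Set.ncard_le_ncard hsub hfin).trans ((D.isPath_path h).ncard_setOf_mem_edges_le_two v)

lemma ncard_setOf_mem_edges_path_le {E : Set (Sym2 U)} (hE : E.Finite) {k : ℕ} (hk : 2 ≤ k)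
    (hdeg : ∀ x, {y | s(x, y) ∈ E}.ncard ≤ k) (v : W) :
    {u | ∃ (a b : U) (h : H.Adj a b), s(a, b) ∈ E ∧ s(v, u) ∈ (D.path h).edges}.ncard ≤ k := by
  by_cases hv : ∃ x, v = D.branch x
  · obtain ⟨x, rfl⟩ := hv
    exact (D.ncard_setOf_mem_edges_path_branch_le
      (hE.preimage fun y _ z _ h => Sym2.congr_right.mp h)).trans (hdeg x)
  · push Not at hv
    exact (D.ncard_setOf_mem_edges_path_le_two hv).trans hk

end Subdivision

theorem HasCubicMesh.of_subdivision {U W : Type} {H : SimpleGraph U} {S : SimpleGraph W}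
    {N : ℕ} (hH : HasCubicMesh H N) (D : Subdivision H S) : HasCubicMesh S N := by
  obtain ⟨ra, rb, ca, cb, rows, cols, hrows, hcols, hrr, hcc, hrends, hcends, hdeg, hcross⟩ := hH
  have hrnil : ∀ i, ¬ (rows i).Nil := fun i => by
    obtain ⟨x, y, q, -, hq, hqr, -⟩ := hcross i i
    exact not_nil_of_edges_subset (not_nil_iff_lt_length.mpr hq) fun e he => hqr e he
  have hcnil : ∀ j, ¬ (cols j).Nil := fun j => by
    obtain ⟨x, y, q, -, hq, -, hqc, -⟩ := hcross j j
    exact not_nil_of_edges_subset (not_nil_iff_lt_length.mpr hq) fun e he => hqc e he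
  let E : Set (Sym2 U) := {e | (∃ i, e ∈ (rows i).edges) ∨ ∃ j, e ∈ (cols j).edges}
  have hE : E.Finite := by
    refine ((Set.finite_iUnion fun i => (rows i).edges.finite_toSet).union
      (Set.finite_iUnion fun j => (cols j).edges.finite_toSet)).subset ?_
    rintro e (⟨i, he⟩ | ⟨j, he⟩)
    exacts [.inl (Set.mem_iUnion.mpr ⟨i, he⟩), .inr (Set.mem_iUnion.mpr ⟨j, he⟩)]
  refine ⟨fun i => D.branch (ra i), fun i => D.branch (rb i), fun j => D.branch (ca j),
    fun j => D.branch (cb j), fun i => D.lift (rows i), fun j => D.lift (cols j),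
    fun i => D.isPath_lift (hrows i), fun j => D.isPath_lift (hcols j),
    fun i i' hne => D.support_lift_disjoint (hrnil i) (hrnil i') (hrr i i' hne),
    fun j j' hne => D.support_lift_disjoint (hcnil j) (hcnil j') (hcc j j' hne),
    fun i j => ?_, fun i j => ?_, fun v => ?_, fun i j => ?_⟩
  · simpa only [D.branch_mem_support_lift] using hrends i j
  · simpa only [D.branch_mem_support_lift] using hcends i j
  · convert D.ncard_setOf_mem_edges_path_le hE (by norm_num) hdeg v using 2
    ext u
    simp only [Set.mem_ofPred_eq, D.mem_edges_lift, E]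
    grind
  · obtain ⟨x, y, q, hq, hqlen, hqr, hqc, hinter⟩ := hcross i j
    exact ⟨D.branch x, D.branch y, D.lift q, D.isPath_lift hq,
      hqlen.trans_le (D.length_le_length_lift q),
      fun e he => D.edges_lift_subset (fun e he => hqr e he) he,
      fun e he => D.edges_lift_subset (fun e he => hqc e he) he,
      D.mem_support_lift_inter_iff (hrows i) (not_nil_iff_lt_length.mpr hqlen)
        (fun e he => hqr e he) (fun e he => hqc e he) hinter⟩



section Wall

variable (N : ℕ)

/-- Out-of-range coordinates are clamped to the last row or column; all uses below are in
range. -/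
def wallVertex (r c : ℕ) : Fin (2 * N + 2) × Fin (2 * N + 2) :=
  (⟨min r (2 * N + 1), by omega⟩, ⟨min c (2 * N + 1), by omega⟩)

variable {N}

lemma wallVertex_eq_iff {r c : ℕ} (v : Fin (2 * N + 2) × Fin (2 * N + 2)) :
    wallVertex N r c = v ↔ min r (2 * N + 1) = v.1 ∧ min c (2 * N + 1) = v.2 := by
  simp [wallVertex, Prod.ext_iff, Fin.ext_iff]

lemma wallGraph_adj_wallVertex {r c r' c' : ℕ} (hr : r ≤ 2 * N + 1) (hc : c ≤ 2 * N + 1)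
    (hr' : r' ≤ 2 * N + 1) (hc' : c' ≤ 2 * N + 1)
    (h : (r = r' ∧ (c + 1 = c' ∨ c' + 1 = c)) ∨
      (c = c' ∧ ((r + 1 = r' ∧ r % 2 = c % 2) ∨ (r' + 1 = r ∧ r' % 2 = c % 2)))) :
    (wallGraph (2 * N + 2)).Adj (wallVertex N r c) (wallVertex N r' c') := by
  simp only [wallGraph, fromRel_adj, wallVertex, ne_eq, Prod.ext_iff, Fin.ext_iff]
  omega

lemma wallGraph_ncard_neighborSet_le_three (M : ℕ) (x : Fin M × Fin M) :
    ((wallGraph M).neighborSet x).ncard ≤ 3 := by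
  let φ : Fin M × Fin M → ℕ × ℕ := fun p => (p.1, p.2)
  have hφ : φ.Injective := fun p q h => by
    simpa [φ, Prod.ext_iff, Fin.ext_iff] using h
  have hsub : φ '' (wallGraph M).neighborSet x ⊆ {((x.1 : ℕ), (x.2 : ℕ) - 1),
      ((x.1 : ℕ), (x.2 : ℕ) + 1),
      (if (x.1 : ℕ) % 2 = (x.2 : ℕ) % 2 then (x.1 : ℕ) + 1 else (x.1 : ℕ) - 1, (x.2 : ℕ))} := by
    rintro _ ⟨y, hy, rfl⟩
    simp only [mem_neighborSet, wallGraph, fromRel_adj, ne_eq, Prod.ext_iff, Fin.ext_iff] at hy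
    simp only [φ, Set.mem_insert_iff, Set.mem_singleton_iff, Prod.ext_iff]
    split_ifs <;> omega
  rw [← Set.ncard_image_of_injective _ hφ]
  exact (Set.ncard_le_ncard hsub (Set.toFinite _)).trans
    ((Set.ncard_insert_le _ _).trans
      (Nat.succ_le_succ ((Set.ncard_insert_le _ _).trans (by simp))))

def wallRow (i : ℕ) (hi : i < N) :
    (wallGraph (2 * N + 2)).Walk (wallVertex N (2 * i + 1) 0)
      (wallVertex N (2 * i + 1) (2 * N + 1)) :=
  ofSeq (fun k => wallVertex N (2 * i + 1) k) (2 * N + 1) fun k hk =>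
    wallGraph_adj_wallVertex (by omega) (by omega) (by omega) (by omega) (by omega)

variable (N) in
/-- The `k`-th vertex of the `j`-th mesh column, which zigzags down through the wall columns
`2j+2` and `2j+1`: step `k` goes down when `k` is even and sideways when `k` is odd. -/
def wallColumnSeq (j k : ℕ) : Fin (2 * N + 2) × Fin (2 * N + 2) :=
  wallVertex N ((k + 1) / 2) (2 * j + 2 - k % 4 / 2)

def wallColumn (j : ℕ) (hj : j < N) :
    (wallGraph (2 * N + 2)).Walk (wallColumnSeq N j 0) (wallColumnSeq N j (4 * N + 1)) :=
  ofSeq (wallColumnSeq N j) (4 * N + 1) fun k hk => by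
    unfold wallColumnSeq
    exact wallGraph_adj_wallVertex (by omega) (by omega) (by omega) (by omega) (by omega)

lemma mem_support_wallRow {i : ℕ} (hi : i < N) (v : Fin (2 * N + 2) × Fin (2 * N + 2)) :
    v ∈ (wallRow i hi).support ↔ (v.1 : ℕ) = 2 * i + 1 := by
  rw [wallRow, mem_support_ofSeq]
  constructor
  · rintro ⟨k, -, rfl⟩
    simp only [wallVertex]
    omega
  · intro h
    exact ⟨v.2, by omega, (wallVertex_eq_iff v).mpr (by omega)⟩

lemma mem_support_wallColumn {j : ℕ} (hj : j < N) (v : Fin (2 * N + 2) × Fin (2 * N + 2)) :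
    v ∈ (wallColumn j hj).support ↔ (v.2 : ℕ) = 2 * j + 2 ∨
      ((v.2 : ℕ) = 2 * j + 1 ∧ 1 ≤ (v.1 : ℕ) ∧ (v.1 : ℕ) ≤ 2 * N) := by
  rw [wallColumn, mem_support_ofSeq]
  constructor
  · rintro ⟨k, hk, rfl⟩
    simp only [wallColumnSeq, wallVertex]
    omega
  · intro h
    exact ⟨2 * v.1 - (v.1 + v.2) % 2, by omega, (wallVertex_eq_iff v).mpr (by omega)⟩

lemma isPath_wallRow {i : ℕ} (hi : i < N) : (wallRow i hi).IsPath :=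
  isPath_ofSeq _ _ fun k hk l hl h => by
    simp only [wallVertex, Prod.ext_iff, Fin.ext_iff, Set.mem_ofPred_eq] at h hk hl
    omega

lemma isPath_wallColumn {j : ℕ} (hj : j < N) : (wallColumn j hj).IsPath :=
  isPath_ofSeq _ _ fun k hk l hl h => by
    simp only [wallColumnSeq, wallVertex, Prod.ext_iff, Fin.ext_iff, Set.mem_ofPred_eq]
      at h hk hl
    omega

lemma exists_wallRow_inter_wallColumn {i j : ℕ} (hi : i < N) (hj : j < N) :
    ∃ (x y : Fin (2 * N + 2) × Fin (2 * N + 2)) (q : (wallGraph (2 * N + 2)).Walk x y),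
      q.IsPath ∧ 0 < q.length ∧ (∀ e ∈ q.edges, e ∈ (wallRow i hi).edges) ∧
      (∀ e ∈ q.edges, e ∈ (wallColumn j hj).edges) ∧
      ∀ v, (v ∈ (wallRow i hi).support ∧ v ∈ (wallColumn j hj).support) ↔ v ∈ q.support := by
  have hadj : (wallGraph (2 * N + 2)).Adj (wallVertex N (2 * i + 1) (2 * j + 1))
      (wallVertex N (2 * i + 1) (2 * j + 2)) :=
    wallGraph_adj_wallVertex (by omega) (by omega) (by omega) (by omega) (by omega)
  refine ⟨_, _, hadj.toWalk, hadj.isPath_toWalk, by simp, ?_, ?_, fun v => ?_⟩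
  · simp only [hadj.edges_toWalk, List.mem_singleton, forall_eq, wallRow, mem_edges_ofSeq]
    exact ⟨2 * j + 1, by omega, rfl⟩
  · simp only [hadj.edges_toWalk, List.mem_singleton, forall_eq, wallColumn, mem_edges_ofSeq]
    refine ⟨4 * i + 1, by omega, ?_⟩
    rw [Sym2.eq_swap]
    unfold wallColumnSeq
    congr 2 <;> omega
  · rw [mem_support_wallRow, mem_support_wallColumn, hadj.support_toWalk]
    simp only [List.mem_cons, List.not_mem_nil, or_false, @eq_comm _ v, wallVertex_eq_iff]
    omega

theorem wallGraph_hasCubicMesh (N : ℕ) : HasCubicMesh (wallGraph (2 * N + 2)) N := by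
  refine ⟨fun i => wallVertex N (2 * i + 1) 0, fun i => wallVertex N (2 * i + 1) (2 * N + 1),
    fun j => wallColumnSeq N j 0, fun j => wallColumnSeq N j (4 * N + 1),
    fun i => wallRow i i.isLt, fun j => wallColumn j j.isLt,
    fun i => isPath_wallRow i.isLt, fun j => isPath_wallColumn j.isLt,
    fun i i' hne v => ?_, fun j j' hne v => ?_, fun i j => ?_, fun i j => ?_, fun v => ?_,
    fun i j => exists_wallRow_inter_wallColumn i.isLt j.isLt⟩
  · have := Fin.val_injective.ne hne
    simp only [mem_support_wallRow]
    omega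
  · have := Fin.val_injective.ne hne
    simp only [mem_support_wallColumn]
    omega
  · have := j.isLt
    simp only [mem_support_wallColumn, wallVertex]
    omega
  · have := i.isLt
    simp only [mem_support_wallRow]
    simp only [wallColumnSeq, wallVertex]
    omega
  · refine (Set.ncard_le_ncard ?_ (Set.toFinite _)).trans
      (wallGraph_ncard_neighborSet_le_three _ v)
    rintro u (⟨i, hu⟩ | ⟨j, hu⟩)
    exacts [adj_of_mem_edges _ hu, adj_of_mem_edges _ hu]

end Wall

theorem wall_subdivision_has_cubic_mesh_general (N : ℕ) {W : Type}
    (S : SimpleGraph W) (hS : IsSubdivision (wallGraph (2 * N + 2)) S) :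
    HasCubicMesh S N := by
  obtain ⟨D⟩ := hS.nonempty_subdivision
  exact (wallGraph_hasCubicMesh N).of_subdivision D

/-- Any subdivision of the `(2N+2) × (2N+2)` wall contains an `N × N` cubic
mesh as a subgraph. -/
theorem wall_subdivision_has_cubic_mesh (N : ℕ) (hN : 1 ≤ N) {W : Type}
    (S : SimpleGraph W) (hS : IsSubdivision (wallGraph (2 * N + 2)) S) :
    HasCubicMesh S N :=
  wall_subdivision_has_cubic_mesh_general N S hS
end

section
/- For every positive integer N, the graph G_N contains no K_{2,2} subgraph. -/
/-- The graph `G_N`: the disjoint union of `N` paths, each on `N` vertices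
(vertex `inl (i, j)` is the `j`-th vertex of the path `P_i`), together with `N` new
vertices `inr k`, where `inr k` is adjacent to the `k`-th vertex of each path. -/
def GN (N : ℕ) : SimpleGraph (Fin N × Fin N ⊕ Fin N) :=
  SimpleGraph.fromRel fun a b =>
    match a, b with
    | Sum.inl p, Sum.inl q => p.1 = q.1 ∧ (p.2 : ℕ) + 1 = (q.2 : ℕ)
    | Sum.inl p, Sum.inr k => p.2 = k
    | _, _ => False

/-!
A copy of `K_{2,2}` is a pair of distinct vertices with two distinct common neighbours, and in
`G_N` two distinct vertices have at most one common neighbour: two vertices of the same path can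
only share the vertex between them, two vertices of different paths only the hub of their common
position, a path vertex and a hub only the path neighbour lying in the hub's position, and two
hubs share nothing since every path vertex sees a single hub.
-/

open SimpleGraph

lemma kttFree_two_of_commonNeighbors_subsingleton {V : Type} {G : SimpleGraph V}
    (h : ∀ a b, a ≠ b → (G.commonNeighbors a b).Subsingleton) : KttFree G 2 := by
  classical
  rintro ⟨A, B, hA, hB, -, hadj⟩
  obtain ⟨a, b, hab, rfl⟩ := Finset.card_eq_two.mp hA
  obtain ⟨c, d, hcd, rfl⟩ := Finset.card_eq_two.mp hB
  have adj : ∀ x ∈ ({a, b} : Finset V), ∀ y ∈ ({c, d} : Finset V), G.Adj x y := hadj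
  simp only [Finset.mem_insert, Finset.mem_singleton, forall_eq_or_imp, forall_eq] at adj
  exact hcd <| h a b hab (G.mem_commonNeighbors.mpr ⟨adj.1.1, adj.2.1⟩)
    (G.mem_commonNeighbors.mpr ⟨adj.1.2, adj.2.2⟩)

namespace GN

variable {N : ℕ}

@[simp]
lemma adj_inl_inl {p q : Fin N × Fin N} :
    (GN N).Adj (.inl p) (.inl q) ↔
      p.1 = q.1 ∧ ((p.2 : ℕ) + 1 = q.2 ∨ (q.2 : ℕ) + 1 = p.2) := by
  simp only [GN, fromRel_adj, ne_eq, Sum.inl.injEq, Prod.ext_iff, Fin.ext_iff]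
  omega

@[simp]
lemma adj_inl_inr {p : Fin N × Fin N} {k : Fin N} : (GN N).Adj (.inl p) (.inr k) ↔ p.2 = k := by
  simp [GN]

@[simp]
lemma adj_inr_inl {p : Fin N × Fin N} {k : Fin N} : (GN N).Adj (.inr k) (.inl p) ↔ p.2 = k := by
  rw [adj_comm, adj_inl_inr]

@[simp]
lemma not_adj_inr_inr {k l : Fin N} : ¬ (GN N).Adj (.inr k) (.inr l) := by
  simp [GN]

lemma commonNeighbors_subsingleton {a b : Fin N × Fin N ⊕ Fin N} (hab : a ≠ b) :
    ((GN N).commonNeighbors a b).Subsingleton := by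
  intro c hc d hd
  rw [mem_commonNeighbors] at hc hd
  rcases a with ⟨i₁, j₁⟩ | k₁ <;> rcases b with ⟨i₂, j₂⟩ | k₂ <;>
    rcases c with ⟨i₃, j₃⟩ | k₃ <;> rcases d with ⟨i₄, j₄⟩ | k₄ <;>
    simp only [adj_inl_inl, adj_inl_inr, adj_inr_inl, not_adj_inr_inr, ne_eq, Sum.inl.injEq,
      Sum.inr.injEq, Prod.mk.injEq, Fin.ext_iff, reduceCtorEq, false_and, and_false] at * <;>
    omega

end GN

theorem GN_K22_free_general (N : ℕ) : KttFree (GN N) 2 :=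
  kttFree_two_of_commonNeighbors_subsingleton fun _ _ => GN.commonNeighbors_subsingleton

/-- `G_N` contains no `K_{2,2}` subgraph. -/
theorem GN_K22_free (N : ℕ) (hN : 1 ≤ N) : KttFree (GN N) 2 :=
  GN_K22_free_general N
end

section
/- For every positive integer N, the graph G_N has twin-width at most 3. -/
/-!
Order the vertices column by column, putting `u_k` right after the `k`-th vertices of the paths.
All partitions of the uncontraction sequence consist of intervals of this order; it is obtained
by inserting cut points one at a time: first between consecutive columns, then around each
`u_k`, then between consecutive rows, row by row, each time from the leftmost column to the
rightmost.

An edge at `u_k` never turns red: once `u_k` is separated from the rest of its column, it is a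
singleton and every other part of the column consists of neighbours of it. So red edges come
from path edges. A part that meets several columns is a union of whole columns, and otherwise it
is an interval of rows in one column `t`. Since the row cuts advance from left to right, column
`t + 1` has no cut inside that interval and column `t - 1` at most one, so the part has at most
one red neighbour on its right and two on its left.
-/

open Finset Function

section CutPartition

variable {V α : Type} [LinearOrder α] {e : V → α} {S : Set V} {x y z : V}

/-- `V`, ordered by `e`, is cut into intervals at the points of `S`: a cut at `v` separates
everything before `v` from `v` and everything after it. -/
def SameBlock (e : V → α) (S : Set V) (x y : V) : Prop :=
  ∀ v ∈ S, e v ≤ e x ↔ e v ≤ e y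

namespace SameBlock

theorem refl (x : V) : SameBlock e S x x := fun _ _ => Iff.rfl

theorem symm (h : SameBlock e S x y) : SameBlock e S y x := fun v hv => (h v hv).symm

theorem trans (h : SameBlock e S x y) (h' : SameBlock e S y z) : SameBlock e S x z :=
  fun v hv => (h v hv).trans (h' v hv)

theorem of_le_of_le (h : SameBlock e S x z) (hxy : e x ≤ e y) (hyz : e y ≤ e z) :
    SameBlock e S x y :=
  fun v hv => ⟨fun hvx => hvx.trans hxy, fun hvy => (h v hv).2 (hvy.trans hyz)⟩

end SameBlock

theorem sameBlock_iff_of_le (hxy : e x ≤ e y) :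
    SameBlock e S x y ↔ ∀ v ∈ S, ¬ (e x < e v ∧ e v ≤ e y) := by
  refine forall₂_congr fun v _ => ⟨fun h ⟨hxv, hvy⟩ => hxv.not_ge (h.2 hvy), fun h => ?_⟩
  exact ⟨fun hvx => hvx.trans hxy, fun hvy => not_lt.1 fun hxv => h ⟨hxv, hvy⟩⟩

theorem exists_cut_of_not_sameBlock (hxy : e x ≤ e y) (h : ¬ SameBlock e S x y) :
    ∃ v ∈ S, e x < e v ∧ e v ≤ e y := by
  simpa [sameBlock_iff_of_le hxy] using h

theorem sameBlock_insert_iff {v : V} :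
    SameBlock e (insert v S) x y ↔ SameBlock e S x y ∧ (e v ≤ e x ↔ e v ≤ e y) := by
  simp only [SameBlock, Set.forall_mem_insert]
  exact and_comm

variable [Fintype V]

open Classical in
noncomputable def block (e : V → α) (S : Set V) (x : V) : Finset V :=
  univ.filter (SameBlock e S x)

open Classical in
noncomputable def blocks (e : V → α) (S : Set V) : Finset (Finset V) :=
  univ.image (block e S)

theorem mem_block : y ∈ block e S x ↔ SameBlock e S x y := by
  simp [block]

theorem block_eq_of_sameBlock (h : SameBlock e S x y) : block e S x = block e S y := by
  ext z
  simp only [mem_block]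
  exact ⟨h.symm.trans, h.trans⟩

theorem block_mem_blocks (x : V) : block e S x ∈ blocks e S := by
  classical
  exact mem_image_of_mem _ (mem_univ x)

theorem mem_blocks {X : Finset V} : X ∈ blocks e S ↔ ∃ x, block e S x = X := by
  simp [blocks]

theorem eq_block_of_mem {X : Finset V} (hX : X ∈ blocks e S) (hy : y ∈ X) :
    X = block e S y := by
  obtain ⟨x, rfl⟩ := mem_blocks.1 hX
  exact block_eq_of_sameBlock (mem_block.1 hy)

theorem isPartition_blocks : IsPartition (blocks e S) := by
  refine ⟨fun X hX => ?_, fun v =>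
    ⟨block e S v, ⟨block_mem_blocks v, mem_block.2 (.refl v)⟩, ?_⟩⟩
  · obtain ⟨x, rfl⟩ := mem_blocks.1 hX
    exact ⟨x, mem_block.2 (.refl x)⟩
  · rintro X ⟨hX, hv⟩
    exact eq_block_of_mem hX hv

theorem blocks_eq_singleton_univ [Nonempty V] (h : ∀ v ∈ S, ∀ x, e v ≤ e x) :
    blocks e S = {univ} := by
  classical
  have hblock : ∀ x, block e S x = univ := fun x =>
    eq_univ_of_forall fun y => mem_block.2 fun v hv => iff_of_true (h v hv x) (h v hv y)
  rw [blocks, show block e S = fun _ => univ from funext hblock, image_const univ_nonempty]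

theorem blocks_eq_singletons (he : Injective e) (h : ∀ v, v ∈ S) :
    ∀ X ∈ blocks e S, ∃ v, X = {v} := by
  intro X hX
  obtain ⟨x, rfl⟩ := mem_blocks.1 hX
  refine ⟨x, eq_singleton_iff_unique_mem.2 ⟨mem_block.2 (.refl x), fun y hy => ?_⟩⟩
  have hxy := mem_block.1 hy
  exact he (le_antisymm ((hxy y (h y)).2 le_rfl) ((hxy x (h x)).1 le_rfl))

theorem block_insert_of_not_sameBlock {a v w : V} (hav : SameBlock e S a v)
    (haw : ¬ SameBlock e S a w) : block e (insert v S) w = block e S w := by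
  ext z
  simp only [mem_block, sameBlock_insert_iff, and_iff_left_iff_imp]
  intro hwz
  have hvw : ¬ SameBlock e S v w := fun h => haw (hav.trans h)
  have between : ∀ p q, SameBlock e S p q → e p ≤ e v → e v ≤ e q → SameBlock e S v q :=
    fun p q h hp hq => (h.of_le_of_le hp hq).symm.trans h
  constructor
  · refine fun hw => not_lt.1 fun hz => hvw ?_
    exact between z w hwz.symm hz.le hw
  · refine fun hz => not_lt.1 fun hw => hvw ?_
    exact (between w z hwz hw.le hz).trans hwz.symm

theorem splitsFrom_blocks_insert {a v : V} (hav : e a < e v) (hsame : SameBlock e S a v) :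
    SplitsFrom (blocks e (insert v S)) (blocks e S) := by
  have hlow : ∀ {w}, SameBlock e S a w → ¬ e v ≤ e w → SameBlock e (insert v S) a w :=
    fun h hw => sameBlock_insert_iff.2 ⟨h, iff_of_false hav.not_ge hw⟩
  have hhigh : ∀ {w}, SameBlock e S a w → e v ≤ e w → SameBlock e (insert v S) v w :=
    fun h hw => sameBlock_insert_iff.2 ⟨hsame.symm.trans h, iff_of_true le_rfl hw⟩
  refine ⟨block e S a, block e (insert v S) a, block e (insert v S) v, block_mem_blocks a,
    ⟨a, mem_block.2 (.refl a)⟩, ⟨v, mem_block.2 (.refl v)⟩, fun w hwa hwv => ?_,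
    fun w => ?_, fun W => ⟨fun hW => ?_, ?_⟩⟩
  · have hva := ((sameBlock_insert_iff.1 (mem_block.1 hwv)).2.trans
      (sameBlock_insert_iff.1 (mem_block.1 hwa)).2.symm).1 le_rfl
    exact hav.not_ge hva
  · simp only [mem_block]
    refine ⟨fun h => ?_, ?_⟩
    · by_cases hw : e v ≤ e w
      exacts [.inr (hhigh h hw), .inl (hlow h hw)]
    · rintro (h | h)
      exacts [(sameBlock_insert_iff.1 h).1, hsame.trans (sameBlock_insert_iff.1 h).1]
  · obtain ⟨w, rfl⟩ := mem_blocks.1 hW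
    by_cases h : SameBlock e S a w
    · by_cases hw : e v ≤ e w
      exacts [.inr (.inl (block_eq_of_sameBlock (hhigh h hw)).symm),
        .inl (block_eq_of_sameBlock (hlow h hw)).symm]
    · refine .inr (.inr ⟨block_insert_of_not_sameBlock hsame h ▸ block_mem_blocks w, ?_⟩)
      rw [block_insert_of_not_sameBlock hsame h]
      exact fun hwa => h (mem_block.1 (hwa ▸ mem_block.2 (.refl w)))
  · rintro (rfl | rfl | ⟨hW, hWa⟩)
    · exact block_mem_blocks a
    · exact block_mem_blocks v
    · obtain ⟨w, rfl⟩ := mem_blocks.1 hW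
      have h : ¬ SameBlock e S a w := fun h => hWa (block_eq_of_sameBlock h).symm
      exact block_insert_of_not_sameBlock hsame h ▸ block_mem_blocks w

def cutsBy (τ : V → ℕ) (m : ℕ) : Set V := {v | τ v ≤ m}

theorem isUncontractionSeq_blocks_cutsBy [Nonempty V] (he : Injective e) {τ : V → ℕ}
    (hτ : Injective τ) (hτ_lt : ∀ v, τ v < Fintype.card V)
    (hτ_zero : ∀ v, τ v = 0 → ∀ x, e v ≤ e x) :
    IsUncontractionSeq fun m => blocks e (cutsBy τ m) := by
  have hsurj : ∀ k < Fintype.card V, ∃ v, τ v = k := fun k hk => by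
    have hbij := (Fintype.bijective_iff_injective_and_card
      fun v => (⟨τ v, hτ_lt v⟩ : Fin _)).2
        ⟨fun v w h => hτ (Fin.val_eq_of_eq h), Fintype.card_fin _ |>.symm⟩
    obtain ⟨v, hv⟩ := hbij.2 ⟨k, hk⟩
    exact ⟨v, Fin.val_eq_of_eq hv⟩
  refine ⟨fun _ _ => isPartition_blocks, blocks_eq_singleton_univ fun v hv => hτ_zero v
    (Nat.le_zero.1 hv), blocks_eq_singletons he fun v => Nat.le_sub_one_of_lt (hτ_lt v),
    fun m hm => ?_⟩
  obtain ⟨v, hv⟩ := hsurj (m + 1) hm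
  obtain ⟨v₀, hv₀⟩ := hsurj 0 (by omega)
  have hv₀v : e v₀ < e v := (hτ_zero v₀ hv₀ v).lt_of_ne (he.ne fun h => by simp_all)
  classical
  obtain ⟨a, ha, hmax⟩ := (univ.filter fun w => e w < e v).exists_max_image e
    ⟨v₀, mem_filter.2 ⟨mem_univ _, hv₀v⟩⟩
  have hav : e a < e v := (mem_filter.1 ha).2
  have hcuts : cutsBy τ (m + 1) = insert v (cutsBy τ m) := by
    ext w
    simp only [cutsBy, Set.mem_insert_iff, Set.mem_ofPred_eq]
    refine ⟨fun hw => ?_, by rintro (rfl | hw) <;> omega⟩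
    rcases hw.lt_or_eq with hw | hw
    exacts [.inr (by omega), .inl (hτ (hw.trans hv.symm))]
  simp only [hcuts]
  refine splitsFrom_blocks_insert hav fun w hw => ⟨fun hwa => hwa.trans hav.le, fun hwv => ?_⟩
  have hwv' : w ≠ v := by rintro rfl; simp [cutsBy] at hw; omega
  exact hmax w (mem_filter.2 ⟨mem_univ _, hwv.lt_of_ne (he.ne hwv')⟩)

end CutPartition

theorem redDegree_le_card_of_exists_mem {V α : Type} {G : SimpleGraph V} {P : Finset (Finset V)}
    (hP : IsPartition P) {X : Finset V} {f : V → α} (hf : Injective f) (T : Finset α)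
    (h : ∀ Y ∈ P, RedAdj G X Y → ∃ y ∈ Y, f y ∈ T) : redDegree G P X ≤ T.card := by
  rcases isEmpty_or_nonempty V with hV | hV
  · simp [redDegree, RedAdj, TriAdj]
  choose! g hgY hgT using h
  rw [redDegree, ← Set.ncard_coe_finset T]
  refine Set.ncard_le_ncard_of_injOn (f ∘ g) (fun Y ⟨hY, hr⟩ => hgT Y hY hr)
    (fun Y₁ ⟨h₁, r₁⟩ Y₂ ⟨h₂, r₂⟩ heq => ?_) T.finite_toSet
  obtain ⟨Z, -, hZ⟩ := hP.2 (g Y₁)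
  rw [hZ Y₁ ⟨h₁, hgY Y₁ h₁ r₁⟩, hZ Y₂ ⟨h₂, hf heq ▸ hgY Y₂ h₂ r₂⟩]

namespace GN

variable {N m : ℕ} {v w x y z : Fin N × Fin N ⊕ Fin N}

def col : Fin N × Fin N ⊕ Fin N → ℕ
  | .inl p => p.2
  | .inr k => k

def row : Fin N × Fin N ⊕ Fin N → ℕ
  | .inl p => p.1
  | .inr _ => N

theorem col_lt (v : Fin N × Fin N ⊕ Fin N) : col v < N := by
  rcases v with ⟨i, j⟩ | k <;> simp [col]

theorem row_le (v : Fin N × Fin N ⊕ Fin N) : row v ≤ N := by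
  rcases v with ⟨i, j⟩ | k
  exacts [i.isLt.le, le_rfl]

theorem eq_of_col_eq_of_row_eq (hc : col v = col w) (hr : row v = row w) : v = w := by
  rcases v with ⟨i, j⟩ | k <;> rcases w with ⟨i', j'⟩ | k' <;>
    simp_all [col, row, Fin.ext_iff] <;> omega

theorem exists_col_row {t r : ℕ} (ht : t < N) (hr : r ≤ N) :
    ∃ v : Fin N × Fin N ⊕ Fin N, col v = t ∧ row v = r := by
  rcases hr.lt_or_eq with hr | rfl
  exacts [⟨.inl (⟨r, hr⟩, ⟨t, ht⟩), rfl, rfl⟩, ⟨.inr ⟨t, ht⟩, rfl, rfl⟩]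

theorem adj_iff : (GN N).Adj v w ↔
    row v = row w ∧ row v < N ∧ (col v + 1 = col w ∨ col w + 1 = col v) ∨
      col v = col w ∧ (row v < N ∧ row w = N ∨ row v = N ∧ row w < N) := by
  rcases v with ⟨i, j⟩ | k <;> rcases w with ⟨i', j'⟩ | k' <;>
    simp [GN, col, row, Fin.ext_iff, Prod.ext_iff] <;> omega

def pos (v : Fin N × Fin N ⊕ Fin N) : ℕ ×ₗ ℕ := toLex (col v, row v)

theorem pos_le_pos_iff : pos v ≤ pos w ↔ col v < col w ∨ col v = col w ∧ row v ≤ row w :=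
  Prod.Lex.toLex_le_toLex

theorem pos_lt_pos_iff : pos v < pos w ↔ col v < col w ∨ col v = col w ∧ row v < row w :=
  Prod.Lex.toLex_lt_toLex

theorem pos_injective : Injective (pos (N := N)) := fun v w h => by
  obtain ⟨hc, hr⟩ := Prod.mk.inj (toLex.injective h)
  exact eq_of_col_eq_of_row_eq hc hr

/-- The cut at `v` is made at time `cutTime v`: first the cuts between columns, then those
isolating the `inr k`, then those between consecutive rows, row by row; within each stage,
column by column from left to right. -/
def stage (N r : ℕ) : ℕ := if r = 0 then 0 else if r = N then 1 else r + 1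

def cutTime (v : Fin N × Fin N ⊕ Fin N) : ℕ := stage N (row v) * N + col v

theorem cutTime_lt_of_stage_lt (h : stage N (row w) < stage N (row v)) :
    cutTime w < cutTime v := by
  have hle : (stage N (row w) + 1) * N ≤ stage N (row v) * N := Nat.mul_le_mul_right _ h
  have := col_lt w
  unfold cutTime
  linarith [add_one_mul (stage N (row w)) N]

theorem cutTime_lt_of_row_eq_zero (hw : row w = 0) (hv : row v ≠ 0) : cutTime w < cutTime v := by
  apply cutTime_lt_of_stage_lt
  unfold stage
  split_ifs <;> omega

theorem cutTime_le_of_row_eq_N (hw : row w = N) (hv : row v ≠ 0) (hc : col w ≤ col v) :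
    cutTime w ≤ cutTime v := by
  by_cases hvN : row v = N
  · unfold cutTime
    rw [hw, hvN]
    omega
  · refine (cutTime_lt_of_stage_lt ?_).le
    have := row_le v
    unfold stage
    split_ifs <;> omega

theorem cutTime_lt_of_row_lt (h : row w < row v) (hv : row v < N) :
    cutTime w < cutTime v := by
  apply cutTime_lt_of_stage_lt
  simp only [stage]
  split_ifs <;> omega

theorem cutTime_le_of_row_eq (h : row w = row v) (hc : col w ≤ col v) :
    cutTime w ≤ cutTime v := by
  unfold cutTime
  rw [h]
  omega

theorem cutTime_injective : Injective (cutTime (N := N)) := by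
  intro v w h
  have hs : stage N (row v) = stage N (row w) := by
    by_contra hne
    rcases Nat.lt_or_gt_of_ne hne with hlt | hlt
    exacts [(cutTime_lt_of_stage_lt hlt).ne h, (cutTime_lt_of_stage_lt hlt).ne' h]
  have hc : col v = col w := by
    unfold cutTime at h
    rw [hs] at h
    omega
  refine eq_of_col_eq_of_row_eq hc ?_
  have := row_le v
  have := row_le w
  simp only [stage] at hs
  split_ifs at hs <;> omega

theorem cutTime_lt_card (v : Fin N × Fin N ⊕ Fin N) :
    cutTime v < Fintype.card (Fin N × Fin N ⊕ Fin N) := by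
  have hstage : stage N (row v) ≤ N := by
    have := row_le v
    have := col_lt v
    simp only [stage]
    split_ifs <;> omega
  have := Nat.mul_le_mul_right N hstage
  have := col_lt v
  simp only [cutTime, Fintype.card_sum, Fintype.card_prod, Fintype.card_fin]
  omega

theorem pos_le_of_cutTime_eq_zero (hv : cutTime v = 0) (w : Fin N × Fin N ⊕ Fin N) :
    pos v ≤ pos w := by
  have hN := col_lt v
  have hrow : row v = 0 := by
    have hs : stage N (row v) = 0 := by
      by_contra hs
      have : 1 * N ≤ stage N (row v) * N := Nat.mul_le_mul_right _ (by omega)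
      unfold cutTime at hv
      omega
    have := row_le v
    unfold stage at hs
    split_ifs at hs
    omega
  have : col v = 0 := by unfold cutTime at hv; omega
  rw [pos_le_pos_iff]
  omega

section RedDegree

local notation "Same" => SameBlock pos (cutsBy cutTime m)

theorem row_eq_zero_of_sameBlock_of_col_lt (h : Same x z) (hxz : col x < col z)
    (hv : v ∈ cutsBy cutTime m) : row v = 0 := by
  by_contra hr
  obtain ⟨w, hwc, hwr⟩ := exists_col_row (col_lt z) (Nat.zero_le N)
  have := h w ((cutTime_lt_of_row_eq_zero hwr hr).le.trans hv)
  simp only [pos_le_pos_iff] at this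
  omega

theorem sameBlock_of_col_eq (hS : ∀ v ∈ cutsBy (cutTime (N := N)) m, row v = 0)
    (h : col x = col y) : Same x y := by
  intro v hv
  simp only [pos_le_pos_iff, hS v hv, h, Nat.zero_le, and_true]

theorem adj_of_sameBlock_of_not_sameBlock (hx : row x < N) (hy : row y = N) (hcol : col x = col y)
    (hxy : ¬ Same x y) {x' y'} (hx' : Same x x') (hy' : Same y y') : (GN N).Adj x' y' := by
  obtain ⟨v, hv, hxv, hvy⟩ :=
    exists_cut_of_not_sameBlock (pos_le_pos_iff.2 (.inr ⟨hcol, by omega⟩)) hxy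
  rw [pos_lt_pos_iff] at hxv
  rw [pos_le_pos_iff] at hvy
  have hyS : y ∈ cutsBy cutTime m := (cutTime_le_of_row_eq_N hy (by omega) (by omega)).trans hv
  have hcut : ∀ t < N, ∃ w ∈ cutsBy cutTime m, col w = t ∧ row w = 0 := fun t ht => by
    obtain ⟨w, hwc, hwr⟩ := exists_col_row ht (Nat.zero_le N)
    exact ⟨w, (cutTime_lt_of_row_eq_zero hwr (by omega)).le.trans hyS, hwc, hwr⟩
  have hy'y := hy' y hyS
  have hx'y := hx' y hyS
  simp only [pos_le_pos_iff, le_refl, true_iff] at hy'y hx'y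
  have := col_lt y'
  have := row_le y'
  have hy'c : col y' = col y := by
    by_cases ht : col y + 1 < N
    · obtain ⟨w, hw, hwc, hwr⟩ := hcut _ ht
      have := hy' w hw
      simp only [pos_le_pos_iff] at this
      omega
    · omega
  have hx'c : col x' = col y := by
    by_cases ht : col y = 0
    · omega
    · obtain ⟨w, hw, hwc, hwr⟩ := hcut _ (col_lt y)
      have := hx' w hw
      simp only [pos_le_pos_iff] at this
      omega
  rw [adj_iff]
  omega

theorem exists_sameBlock_of_right_adj {h : Fin N × Fin N ⊕ Fin N} (hxh : Same x h)
    (hle : pos x ≤ pos h) (hxy : ¬ Same x y) (hrow : row y = row x) (hrx : row x < N)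
    (hcol : col y = col x + 1) :
    ∃ w, Same y w ∧ pos w = toLex (col h + 1, min (row h) (N - 1)) := by
  rw [pos_le_pos_iff] at hle
  have hch : col h = col x := by
    by_contra hne
    have hS := fun v => row_eq_zero_of_sameBlock_of_col_lt (v := v) hxh (by omega)
    rcases (by omega : col h = col y ∨ col y < col h) with heq | hlt
    · exact hxy (hxh.trans (sameBlock_of_col_eq hS heq))
    · exact hxy (hxh.of_le_of_le (pos_le_pos_iff.2 (.inl (by omega)))
        (pos_le_pos_iff.2 (.inl hlt)))
  have := row_le h
  obtain ⟨w, hwc, hwr⟩ := exists_col_row (r := min (row h) (N - 1)) (col_lt y) (by omega)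
  refine ⟨w, (sameBlock_iff_of_le (pos_le_pos_iff.2 (.inr ⟨hwc.symm, by omega⟩))).2 ?_, ?_⟩
  · rintro v hv ⟨hyv, hvw⟩
    rw [pos_lt_pos_iff] at hyv
    rw [pos_le_pos_iff] at hvw
    obtain ⟨v', hv'c, hv'r⟩ := exists_col_row (col_lt x) (row_le v)
    have hv' : v' ∈ cutsBy cutTime m := (cutTime_le_of_row_eq hv'r (by omega)).trans hv
    refine (sameBlock_iff_of_le (pos_le_pos_iff.2 hle)).1 hxh v' hv' ⟨?_, ?_⟩
    · rw [pos_lt_pos_iff]; omega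
    · rw [pos_le_pos_iff]; omega
  · rw [pos, hwc, hwr, hcol, hch]

theorem exists_sameBlock_of_left_adj {l h : Fin N × Fin N ⊕ Fin N} (hlx : Same l x)
    (hl : pos l ≤ pos x) (hxh : Same x h) (hh : pos x ≤ pos h) (hxy : ¬ Same x y)
    (hrow : row y = row x) (hrx : row x < N) (hcol : col y + 1 = col x) :
    ∃ w, Same y w ∧ (pos w = toLex (col l - 1, row l) ∨
      pos w = toLex (col l - 1, min (row h) (N - 1))) := by
  rw [pos_le_pos_iff] at hl hh
  have hcl : col l = col x := by
    by_contra hne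
    have hS := fun v => row_eq_zero_of_sameBlock_of_col_lt (v := v) hlx (by omega)
    rcases (by omega : col l = col y ∨ col l < col y) with heq | hlt
    · exact hxy (hlx.symm.trans (sameBlock_of_col_eq hS heq))
    · exact hxy (hlx.symm.trans
        (hlx.of_le_of_le (pos_le_pos_iff.2 (.inl hlt)) (pos_le_pos_iff.2 (.inl (by omega)))))
  have := row_le h
  obtain ⟨w₁, hw₁c, hw₁r⟩ := exists_col_row (r := row l) (col_lt y) (by omega)
  have hw₁ : pos w₁ = toLex (col l - 1, row l) := by rw [pos, hw₁c, hw₁r]; congr; omega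
  rcases (by omega : col x < col h ∨ col h = col x) with hlt | heq
  · have hS := fun v => row_eq_zero_of_sameBlock_of_col_lt (v := v) hxh hlt
    exact ⟨w₁, sameBlock_of_col_eq hS hw₁c.symm, .inl hw₁⟩
  obtain ⟨w₂, hw₂c, hw₂r⟩ :=
    exists_col_row (r := min (row h) (N - 1)) (col_lt y) (by omega)
  by_cases h₁ : Same y w₁
  · exact ⟨w₁, h₁, .inl hw₁⟩
  by_cases h₂ : Same y w₂
  · exact ⟨w₂, h₂, .inr (by rw [pos, hw₂c, hw₂r]; congr; omega)⟩
  -- Column `col y` has cuts on both sides of row `row x`; the earlier one then also exists in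
  -- column `col x`, where it would separate `l` from `x`.
  obtain ⟨v₁, hv₁, hwv₁, hv₁y⟩ := exists_cut_of_not_sameBlock
    (pos_le_pos_iff.2 (.inr ⟨by omega, by omega⟩)) fun h => h₁ h.symm
  obtain ⟨v₂, hv₂, hyv₂, hv₂w⟩ := exists_cut_of_not_sameBlock
    (pos_le_pos_iff.2 (.inr ⟨by omega, by omega⟩)) h₂
  rw [pos_lt_pos_iff] at hwv₁ hyv₂
  rw [pos_le_pos_iff] at hv₁y hv₂w
  obtain ⟨v, hvc, hvr⟩ := exists_col_row (col_lt x) (row_le v₁)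
  have hv : v ∈ cutsBy cutTime m := (cutTime_lt_of_row_lt (by omega) (by omega)).le.trans hv₂
  exfalso
  refine (sameBlock_iff_of_le (pos_le_pos_iff.2 hl)).1 hlx v hv ⟨?_, ?_⟩
  · rw [pos_lt_pos_iff]; omega
  · rw [pos_le_pos_iff]; omega

end RedDegree

theorem redDegree_block_le_three (m : ℕ) (x₀ : Fin N × Fin N ⊕ Fin N) :
    redDegree (GN N) (blocks pos (cutsBy cutTime m)) (block pos (cutsBy cutTime m) x₀) ≤ 3 := by
  have hne : (block pos (cutsBy cutTime m) x₀).Nonempty := ⟨x₀, mem_block.2 (.refl x₀)⟩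
  obtain ⟨l, hl, hlmin⟩ := (block pos (cutsBy cutTime m) x₀).exists_min_image pos hne
  obtain ⟨h, hh, hhmax⟩ := (block pos (cutsBy cutTime m) x₀).exists_max_image pos hne
  refine (redDegree_le_card_of_exists_mem isPartition_blocks pos_injective
    {toLex (col l - 1, row l), toLex (col l - 1, min (row h) (N - 1)),
      toLex (col h + 1, min (row h) (N - 1))} ?_).trans card_le_three
  rintro Y hY ⟨⟨hXY, x, hx, y, hy, hadj⟩, hnc⟩
  obtain rfl := eq_block_of_mem hY hy
  have hx₀x := mem_block.1 hx
  have hlx := (mem_block.1 hl).symm.trans hx₀x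
  have hxh := hx₀x.symm.trans (mem_block.1 hh)
  have hxy : ¬ SameBlock pos (cutsBy cutTime m) x y := fun hs =>
    hXY ((block_eq_of_sameBlock hx₀x).trans (block_eq_of_sameBlock hs))
  rcases adj_iff.1 hadj with
    ⟨hrow, hrx, hcol | hcol⟩ | ⟨hcol, ⟨hrx, hry⟩ | ⟨hrx, hry⟩⟩
  · obtain ⟨w, hw, hpos⟩ :=
      exists_sameBlock_of_right_adj hxh (hhmax x hx) hxy hrow.symm hrx hcol.symm
    exact ⟨w, mem_block.2 hw, by simp [hpos]⟩
  · obtain ⟨w, hw, hpos⟩ :=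
      exists_sameBlock_of_left_adj hlx (hlmin x hx) hxh (hhmax x hx) hxy hrow.symm hrx hcol
    exact ⟨w, mem_block.2 hw, by rcases hpos with hpos | hpos <;> simp [hpos]⟩
  · exact absurd (fun x' hx' y' hy' => adj_of_sameBlock_of_not_sameBlock hrx hry hcol hxy
      (hx₀x.symm.trans (mem_block.1 hx')) (mem_block.1 hy')) hnc
  · exact absurd (fun x' hx' y' hy' => (adj_of_sameBlock_of_not_sameBlock hry hrx hcol.symm
      (fun hs => hxy hs.symm) (mem_block.1 hy') (hx₀x.symm.trans (mem_block.1 hx'))).symm) hnc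

end GN

/-- `G_N` has twin-width at most `3`. -/
theorem GN_twinwidth_le_three (N : ℕ) (hN : 1 ≤ N) : TwinWidthLE (GN N) 3 := by
  have : Nonempty (Fin N × Fin N ⊕ Fin N) := ⟨.inr ⟨0, hN⟩⟩
  refine ⟨_, isUncontractionSeq_blocks_cutsBy GN.pos_injective GN.cutTime_injective
    GN.cutTime_lt_card fun _ => GN.pos_le_of_cutTime_eq_zero, fun m _ X hX => ?_⟩
  obtain ⟨x, rfl⟩ := mem_blocks.1 hX
  exact GN.redDegree_block_le_three m x
end

section
/- Let t be a positive integer and let (G, 𝒫) be a partitioned graph such that G contains no K_{t,t} subgraph. Let X₁, y, z ∈ 𝒫 be distinct parts with |X₁| ≥ t, and suppose that neither {X₁, y} nor {X₁, z} is a red edge of the partitioned trigraph of (G, 𝒫). Then the number of vertices of y ∪ z that have a neighbor in X₁ is at most 2t − 2. -/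
/-! A part that is not joined to `X₁` by a red edge is either anticomplete or complete to
`X₁`. In the complete case it has fewer than `t` vertices, since together with `t` vertices of
`X₁` it would otherwise span a `K_{t,t}`. So each of `y`, `z` contributes at most `t - 1`
neighbours of `X₁`. -/

section

variable {V : Type} {G : SimpleGraph V} {t : ℕ}

lemma KttFree.card_lt_of_forall_adj (hfree : KttFree G t) {A B : Finset V}
    (hA : t ≤ A.card) (hjoin : ∀ a ∈ A, ∀ b ∈ B, G.Adj a b) : B.card < t := by
  by_contra! hB
  obtain ⟨A', hA'A, hA'⟩ := Finset.exists_subset_card_eq hA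
  obtain ⟨B', hB'B, hB'⟩ := Finset.exists_subset_card_eq hB
  refine hfree ⟨A', B', hA', hB', fun a ha haB => ?_,
    fun a ha b hb => hjoin a (hA'A ha) b (hB'B hb)⟩
  -- the sides are disjoint because `G` has no loops
  exact G.loopless.irrefl a (hjoin a (hA'A ha) a (hB'B haB))

lemma KttFree.ncard_neighbors_in_le_of_not_redAdj (hfree : KttFree G t) {X w : Finset V}
    (hcard : t ≤ X.card) (hne : X ≠ w) (hnr : ¬ RedAdj G X w) :
    {v | v ∈ w ∧ ∃ x ∈ X, G.Adj x v}.ncard ≤ t - 1 := by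
  by_cases hjoin : ∀ x ∈ X, ∀ v ∈ w, G.Adj x v
  · have hw := hfree.card_lt_of_forall_adj hcard hjoin
    calc {v | v ∈ w ∧ ∃ x ∈ X, G.Adj x v}.ncard ≤ (w : Set V).ncard :=
          Set.ncard_le_ncard (fun v hv => hv.1) w.finite_toSet
      _ ≤ t - 1 := by rw [Set.ncard_coe_finset]; omega
  · have hempty : {v | v ∈ w ∧ ∃ x ∈ X, G.Adj x v} = ∅ := by
      refine Set.eq_empty_of_forall_notMem fun v ⟨hv, x, hx, hxv⟩ => ?_
      exact hnr ⟨⟨hne, x, hx, v, hv, hxv⟩, hjoin⟩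
    simp [hempty]

end

theorem few_neighbours_without_red_general (t : ℕ) {V : Type} (G : SimpleGraph V)
    (hfree : KttFree G t)
    (X₁ y z : Finset V)
    (hd1 : X₁ ≠ y) (hd2 : X₁ ≠ z) (hcard : t ≤ X₁.card)
    (hry : ¬ RedAdj G X₁ y) (hrz : ¬ RedAdj G X₁ z) :
    {v : V | (v ∈ y ∨ v ∈ z) ∧ ∃ x ∈ X₁, G.Adj x v}.ncard ≤ 2 * t - 2 := by
  have hy := hfree.ncard_neighbors_in_le_of_not_redAdj hcard hd1 hry
  have hz := hfree.ncard_neighbors_in_le_of_not_redAdj hcard hd2 hrz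
  simp_rw [or_and_right, Set.ofPred_or]
  calc _ ≤ _ := Set.ncard_union_le _ _
    _ ≤ 2 * t - 2 := by omega

/-- In a partitioned graph with no `K_{t,t}` subgraph, if `X₁, y, z` are
distinct parts, `|X₁| ≥ t`, and neither `{X₁, y}` nor `{X₁, z}` is a red edge of the
partitioned trigraph, then at most `2t - 2` vertices of `y ∪ z` have a neighbour in `X₁`. -/
theorem few_neighbours_without_red (t : ℕ) (ht : 1 ≤ t) {V : Type} (G : SimpleGraph V)
    (P : Finset (Finset V)) (hP : IsPartition P) (hfree : KttFree G t)
    (X₁ y z : Finset V) (hX : X₁ ∈ P) (hy : y ∈ P) (hz : z ∈ P)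
    (hd1 : X₁ ≠ y) (hd2 : X₁ ≠ z) (hd3 : y ≠ z) (hcard : t ≤ X₁.card)
    (hry : ¬ RedAdj G X₁ y) (hrz : ¬ RedAdj G X₁ z) :
    {v : V | (v ∈ y ∨ v ∈ z) ∧ ∃ x ∈ X₁, G.Adj x v}.ncard ≤ 2 * t - 2 :=
  few_neighbours_without_red_general t G hfree X₁ y z hd1 hd2 hcard hry hrz
end
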